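/- The map sending an orchard network N on X with r reticulations to its minimum complete reducible sequence MCRS(N) is a bijection between the set of isomorphism classes of such networks and the set S(X,r) of their minimum complete reducible sequences. -/
import Mathlib


/-- A directed graph with node set `V ⊆ ℕ` and arc set `A`.  Leaves are
identified with their taxon labels (natural numbers). -/
structure Net where
  V : Finset ℕ
  A : Finset (ℕ × ℕ)

namespace Net

def indeg (N : Net) (v : ℕ) : ℕ := (N.A.filter (fun a => a.2 = v)).card
def outdeg (N : Net) (v : ℕ) : ℕ := (N.A.filter (fun a => a.1 = v)).card

def isLeaf (N : Net) (v : ℕ) : Prop := v ∈ N.V ∧ N.indeg v = 1 ∧ N.outdeg v = 0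
def isRoot (N : Net) (v : ℕ) : Prop := v ∈ N.V ∧ N.indeg v = 0 ∧ N.outdeg v = 1
def isTreeNode (N : Net) (v : ℕ) : Prop := v ∈ N.V ∧ N.indeg v = 1 ∧ N.outdeg v = 2
def isRetic (N : Net) (v : ℕ) : Prop := v ∈ N.V ∧ N.indeg v = 2 ∧ N.outdeg v = 1

/-- The set of leaves (= taxa) of a network. -/
def leaves (N : Net) : Finset ℕ := N.V.filter (fun v => N.indeg v = 1 ∧ N.outdeg v = 0)

/-- Number of reticulation nodes. -/
def numRetic (N : Net) : ℕ := (N.V.filter (fun v => N.indeg v = 2 ∧ N.outdeg v = 1)).card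

/-- `N` is a rooted binary phylogenetic network: arcs join nodes, it is acyclic,
has a unique root, and every node is a root, leaf, tree node or reticulation. -/
def isPhylo (N : Net) : Prop :=
  (∀ a ∈ N.A, a.1 ∈ N.V ∧ a.2 ∈ N.V) ∧
  (∀ v, ¬ Relation.TransGen (fun u w => (u, w) ∈ N.A) v v) ∧
  (∃! r, N.isRoot r) ∧
  (∀ v ∈ N.V, N.isRoot v ∨ N.isLeaf v ∨ N.isTreeNode v ∨ N.isRetic v)

/-- `(i,j)` is a cherry: `i ≠ j` are leaves with a common parent. -/
def isCherry (N : Net) (i j : ℕ) : Prop :=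
  i ≠ j ∧ N.isLeaf i ∧ N.isLeaf j ∧ ∃ p, (p, i) ∈ N.A ∧ (p, j) ∈ N.A

/-- `(i,j)` is a reticulated cherry: the parent of `i` is a reticulation,
the parent of `j` is a tree node and a parent of the parent of `i`. -/
def isRetCherry (N : Net) (i j : ℕ) : Prop :=
  i ≠ j ∧ N.isLeaf i ∧ N.isLeaf j ∧
    ∃ pi pj, (pi, i) ∈ N.A ∧ (pj, j) ∈ N.A ∧
      N.isRetic pi ∧ N.isTreeNode pj ∧ (pj, pi) ∈ N.A

/-- `(i,j)` is a reducible pair. -/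
def Reducible (N : Net) (s : ℕ × ℕ) : Prop := N.isCherry s.1 s.2 ∨ N.isRetCherry s.1 s.2

end Net

/-- The reduction of a cherry `(i,j)`: delete leaf `i` and simplify the
(now elementary) common parent `p`, whose parent is `g`. -/
def CherryReduce (N : Net) (i j : ℕ) (N' : Net) : Prop :=
  ∃ p g, (p, i) ∈ N.A ∧ (p, j) ∈ N.A ∧ (g, p) ∈ N.A ∧
    N'.V = (N.V.erase i).erase p ∧
    N'.A = (N.A \ {(p, i), (p, j), (g, p)}) ∪ {(g, j)}

/-- The reduction of a reticulated cherry `(i,j)`: delete the arc from the parent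
`pj` of `j` to the parent `pi` of `i`, and simplify the two elementary nodes. -/
def RetCherryReduce (N : Net) (i j : ℕ) (N' : Net) : Prop :=
  ∃ pi pj q g, (pi, i) ∈ N.A ∧ (pj, j) ∈ N.A ∧ (pj, pi) ∈ N.A ∧
    (q, pi) ∈ N.A ∧ q ≠ pj ∧ (g, pj) ∈ N.A ∧
    N'.V = (N.V.erase pi).erase pj ∧
    N'.A = (N.A \ {(pj, pi), (q, pi), (pi, i), (g, pj), (pj, j)}) ∪ {(q, i), (g, j)}

/-- `N'` is the reduction `N^{(i,j)}` of the reducible pair `s = (i,j)` in `N`. -/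
def Reduces (N : Net) (s : ℕ × ℕ) (N' : Net) : Prop :=
  (N.isCherry s.1 s.2 ∧ CherryReduce N s.1 s.2 N') ∨
  (N.isRetCherry s.1 s.2 ∧ RetCherryReduce N s.1 s.2 N')

/-- `N'` is the result of reducing in `N` the pairs of the sequence `S`, from left to right. -/
inductive ReducesSeq : Net → List (ℕ × ℕ) → Net → Prop
  | nil (N : Net) : ReducesSeq N [] N
  | cons {N M N' : Net} {s : ℕ × ℕ} {S : List (ℕ × ℕ)} :
      Reduces N s M → ReducesSeq M S N' → ReducesSeq N (s :: S) N'

/-- `N` is the trivial network `I l` (a root and the leaf `l`). -/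
def isTrivial (N : Net) (l : ℕ) : Prop :=
  ∃ r, r ≠ l ∧ N.V = {r, l} ∧ N.A = {(r, l)}

/-- `S` is a complete reducible sequence for `N`. -/
def CompleteRS (N : Net) (S : List (ℕ × ℕ)) : Prop :=
  ∃ N' l, ReducesSeq N S N' ∧ isTrivial N' l

/-- `N` is an orchard network. -/
def Net.isOrchard (N : Net) : Prop := N.isPhylo ∧ ∃ S, CompleteRS N S

/-- Isomorphism of networks: an arc-preserving and arc-reflecting bijection
of the nodes which is the identity on the leaves. -/
def NetIso (N N' : Net) : Prop :=
  ∃ φ : ℕ → ℕ, Set.BijOn φ ↑N.V ↑N'.V ∧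
    (∀ u ∈ N.V, ∀ v ∈ N.V, ((u, v) ∈ N.A ↔ (φ u, φ v) ∈ N'.A)) ∧
    ∀ l ∈ N.leaves, φ l = l

/-- Augmentation of `(i,j)` when `i` is a new taxon: create a new leaf `i`,
subdivide the arc `(q,j)` into `j` with a new node `p`, and add the arc `(p,i)`. -/
def CherryAug (N : Net) (i j : ℕ) (N' : Net) : Prop :=
  ∃ q p, (q, j) ∈ N.A ∧ i ∉ N.V ∧ p ∉ N.V ∧ p ≠ i ∧
    N'.V = insert i (insert p N.V) ∧
    N'.A = (N.A.erase (q, j)) ∪ {(q, p), (p, j), (p, i)}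

/-- Augmentation of `(i,j)` when `i` is already a leaf: subdivide the arcs into
`i` and `j` with new nodes `pi`, `pj` and add the arc `(pj, pi)`. -/
def RetAug (N : Net) (i j : ℕ) (N' : Net) : Prop :=
  ∃ qi qj pi pj, (qi, i) ∈ N.A ∧ (qj, j) ∈ N.A ∧
    pi ∉ N.V ∧ pj ∉ N.V ∧ pi ≠ pj ∧
    N'.V = insert pi (insert pj N.V) ∧
    N'.A = ((N.A.erase (qi, i)).erase (qj, j)) ∪
      {(qi, pi), (pi, i), (qj, pj), (pj, j), (pj, pi)}

/-- `N'` is the augmentation `^{(i,j)}N` of the pair `s = (i,j)` in `N`. -/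
def Augments (N : Net) (s : ℕ × ℕ) (N' : Net) : Prop :=
  s.1 ≠ s.2 ∧ N.isLeaf s.2 ∧
    ((s.1 ∉ N.leaves ∧ CherryAug N s.1 s.2 N') ∨
     (s.1 ∈ N.leaves ∧ RetAug N s.1 s.2 N'))

/-- The total order on pairs: `(i,j) ≤ (i',j')` iff `i < i'` or (`i = i'` and `j ≤ j'`). -/
def pairLE (p q : ℕ × ℕ) : Prop := p.1 < q.1 ∨ (p.1 = q.1 ∧ p.2 ≤ q.2)

/-- Strict version of `pairLE`. -/
def pairLT (p q : ℕ × ℕ) : Prop := p.1 < q.1 ∨ (p.1 = q.1 ∧ p.2 < q.2)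

/-- Lexicographic order on sequences of pairs (of the same length). -/
def seqLE : List (ℕ × ℕ) → List (ℕ × ℕ) → Prop
  | [], [] => True
  | p :: S, q :: S' => pairLT p q ∨ (p = q ∧ seqLE S S')
  | _, _ => False

/-- `s` is the minimum reducible pair of `N`. -/
def isMRP (N : Net) (s : ℕ × ℕ) : Prop :=
  N.Reducible s ∧ ∀ t, N.Reducible t → pairLE s t

/-- `S` is the minimum complete reducible sequence of `N`. -/
def isMCRS (N : Net) (S : List (ℕ × ℕ)) : Prop :=
  CompleteRS N S ∧ ∀ S', CompleteRS N S' → seqLE S S'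

/-- `N` is (isomorphic to) the network `^S I` generated by applying the
augmentations of `S`, from right to left, to a trivial network. -/
inductive Generates : List (ℕ × ℕ) → Net → Prop
  | triv {N : Net} {l : ℕ} : isTrivial N l → Generates [] N
  | cons {s : ℕ × ℕ} {S : List (ℕ × ℕ)} {N N' : Net} :
      Generates S N → Augments N s N' → Generates (s :: S) N'

/-- `S` is a minimum augmentation sequence: `S = MCRS(^S I)`. -/
def isMinAugSeq (S : List (ℕ × ℕ)) : Prop :=
  ∃ N, Generates S N ∧ isMCRS N S

/-- `N` is tree-child: every internal node has a child that is not a reticulation. -/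
def Net.isTreeChild (N : Net) : Prop :=
  ∀ v ∈ N.V, ¬ N.isLeaf v → ∃ c, (v, c) ∈ N.A ∧ ¬ N.isRetic c

/-- The possible states of a taxon in a network. -/
inductive LState | sN | sP | sS | sT
deriving DecidableEq

open Classical in
/-- The state `σ_N(i)` of a taxon `i`: `sN` if `i` is not a leaf of `N`; otherwise
`sP` if its parent is a reticulation; otherwise `sS` if its sibling is a
reticulation; otherwise `sT`. -/
noncomputable def state (N : Net) (i : ℕ) : LState :=
  if ¬ N.isLeaf i then .sN
  else if ∃ p, (p, i) ∈ N.A ∧ N.isRetic p then .sP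
  else if ∃ p s, (p, i) ∈ N.A ∧ (p, s) ∈ N.A ∧ s ≠ i ∧ N.isRetic s then .sS
  else .sT
/-- The set of minimum complete reducible sequences of orchard networks on `X`
with `r` reticulations. -/
def MCRSSet (X : Finset ℕ) (r : ℕ) : Set (List (ℕ × ℕ)) :=
  {S | ∃ N : Net, N.isOrchard ∧ N.leaves = X ∧ N.numRetic = r ∧ isMCRS N S}


/-! ### Auxiliary lemmas -/

section Aux

namespace Net

lemma in_ge_one {N : Net} {u v : ℕ} (h : (u,v) ∈ N.A) : 1 ≤ N.indeg v :=
  Finset.card_pos.mpr ⟨(u,v), Finset.mem_filter.mpr ⟨h, rfl⟩⟩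

lemma out_ge_one {N : Net} {u v : ℕ} (h : (u,v) ∈ N.A) : 1 ≤ N.outdeg u :=
  Finset.card_pos.mpr ⟨(u,v), Finset.mem_filter.mpr ⟨h, rfl⟩⟩

lemma in_ge_two {N : Net} {u u' v : ℕ} (h : (u,v) ∈ N.A) (h' : (u',v) ∈ N.A)
    (huu : u ≠ u') : 2 ≤ N.indeg v := by
  have hsub : ({(u,v), (u',v)} : Finset (ℕ×ℕ)) ⊆ N.A.filter (fun a => a.2 = v) := by
    intro a ha
    simp only [Finset.mem_insert, Finset.mem_singleton] at ha
    rcases ha with rfl | rfl <;> exact Finset.mem_filter.mpr ⟨by assumption, rfl⟩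
  calc 2 = ({(u,v), (u',v)} : Finset (ℕ×ℕ)).card := by
          rw [Finset.card_insert_of_notMem (by simp [huu]), Finset.card_singleton]
    _ ≤ _ := Finset.card_le_card hsub

lemma out_ge_two {N : Net} {u v v' : ℕ} (h : (u,v) ∈ N.A) (h' : (u,v') ∈ N.A)
    (hvv : v ≠ v') : 2 ≤ N.outdeg u := by
  have hsub : ({(u,v), (u,v')} : Finset (ℕ×ℕ)) ⊆ N.A.filter (fun a => a.1 = u) := by
    intro a ha
    simp only [Finset.mem_insert, Finset.mem_singleton] at ha
    rcases ha with rfl | rfl <;> exact Finset.mem_filter.mpr ⟨by assumption, rfl⟩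
  calc 2 = ({(u,v), (u,v')} : Finset (ℕ×ℕ)).card := by
          rw [Finset.card_insert_of_notMem (by simp [hvv]), Finset.card_singleton]
    _ ≤ _ := Finset.card_le_card hsub

lemma in_unique {N : Net} {v p u : ℕ} (h1 : N.indeg v = 1) (hp : (p,v) ∈ N.A)
    (hu : (u,v) ∈ N.A) : u = p := by
  by_contra hne
  have := in_ge_two hu hp hne
  omega

lemma out_unique {N : Net} {v p u : ℕ} (h1 : N.outdeg v = 1) (hp : (v,p) ∈ N.A)
    (hu : (v,u) ∈ N.A) : u = p := by
  by_contra hne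
  have := out_ge_two hu hp hne
  omega

lemma out_zero {N : Net} {v u : ℕ} (h : N.outdeg v = 0) (hu : (v,u) ∈ N.A) : False := by
  have := out_ge_one hu; omega

lemma in_zero {N : Net} {v u : ℕ} (h : N.indeg v = 0) (hu : (u,v) ∈ N.A) : False := by
  have := in_ge_one hu; omega

lemma out_two {N : Net} {v a b : ℕ} (h2 : N.outdeg v = 2) (ha : (v,a) ∈ N.A)
    (hb : (v,b) ∈ N.A) (hab : a ≠ b) : ∀ c, (v,c) ∈ N.A → c = a ∨ c = b := by
  intro c hc
  by_contra hcon
  push_neg at hcon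
  have hsub : ({(v,a), (v,b), (v,c)} : Finset (ℕ×ℕ)) ⊆ N.A.filter (fun x => x.1 = v) := by
    intro x hx
    simp only [Finset.mem_insert, Finset.mem_singleton] at hx
    rcases hx with rfl | rfl | rfl <;> exact Finset.mem_filter.mpr ⟨by assumption, rfl⟩
  have hcard : ({(v,a), (v,b), (v,c)} : Finset (ℕ×ℕ)).card = 3 := by
    rw [Finset.card_insert_of_notMem (by simp [hab, hcon.1.symm]),
      Finset.card_insert_of_notMem (by simp [hcon.2.symm]), Finset.card_singleton]
  have := Finset.card_le_card hsub
  rw [hcard] at this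
  unfold Net.outdeg at h2
  omega

lemma in_two {N : Net} {v a b : ℕ} (h2 : N.indeg v = 2) (ha : (a,v) ∈ N.A)
    (hb : (b,v) ∈ N.A) (hab : a ≠ b) : ∀ c, (c,v) ∈ N.A → c = a ∨ c = b := by
  intro c hc
  by_contra hcon
  push_neg at hcon
  have hsub : ({(a,v), (b,v), (c,v)} : Finset (ℕ×ℕ)) ⊆ N.A.filter (fun x => x.2 = v) := by
    intro x hx
    simp only [Finset.mem_insert, Finset.mem_singleton] at hx
    rcases hx with rfl | rfl | rfl <;> exact Finset.mem_filter.mpr ⟨by assumption, rfl⟩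
  have hcard : ({(a,v), (b,v), (c,v)} : Finset (ℕ×ℕ)).card = 3 := by
    rw [Finset.card_insert_of_notMem (by simp [hab, hcon.1.symm]),
      Finset.card_insert_of_notMem (by simp [hcon.2.symm]), Finset.card_singleton]
  have := Finset.card_le_card hsub
  rw [hcard] at this
  unfold Net.indeg at h2
  omega

lemma no_self {N : Net} (hN : N.isPhylo) {v : ℕ} (h : (v,v) ∈ N.A) : False :=
  hN.2.1 v (Relation.TransGen.single h)

end Net

end Aux

section CherryCtx

/-- Context for a cherry reduction. -/
structure CC (N M : Net) (i j p g : ℕ) : Prop where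
  phylo : N.isPhylo
  hij : i ≠ j
  leaf_i : N.isLeaf i
  leaf_j : N.isLeaf j
  hpi : (p,i) ∈ N.A
  hpj : (p,j) ∈ N.A
  hgp : (g,p) ∈ N.A
  hV : M.V = (N.V.erase i).erase p
  hA : M.A = (N.A \ {(p,i), (p,j), (g,p)}) ∪ {(g,j)}

namespace CC

lemma of_reduces {N M : Net} {i j : ℕ} (hN : N.isPhylo) (hc : N.isCherry i j)
    (hr : CherryReduce N i j M) : ∃ p g, CC N M i j p g := by
  obtain ⟨p, g, hpi, hpj, hgp, hV, hA⟩ := hr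
  exact ⟨p, g, ⟨hN, hc.1, hc.2.1, hc.2.2.1, hpi, hpj, hgp, hV, hA⟩⟩

variable {N M : Net} {i j p g : ℕ} (c : CC N M i j p g)
include c

lemma in_i : ∀ u, (u,i) ∈ N.A → u = p := fun _ hu => Net.in_unique c.leaf_i.2.1 c.hpi hu
lemma in_j : ∀ u, (u,j) ∈ N.A → u = p := fun _ hu => Net.in_unique c.leaf_j.2.1 c.hpj hu
lemma out_i : ∀ w, (i,w) ∈ N.A → False := fun _ hw => Net.out_zero c.leaf_i.2.2 hw
lemma out_j : ∀ w, (j,w) ∈ N.A → False := fun _ hw => Net.out_zero c.leaf_j.2.2 hw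

lemma p_ne_i : p ≠ i := fun h => c.out_i i (h ▸ c.hpi)
lemma p_ne_j : p ≠ j := fun h => c.out_j j (h ▸ c.hpj)
lemma p_mem : p ∈ N.V := (c.phylo.1 _ c.hpi).1
lemma g_mem : g ∈ N.V := (c.phylo.1 _ c.hgp).1

lemma p_tree : N.isTreeNode p := by
  rcases c.phylo.2.2.2 p c.p_mem with h | h | h | h
  · exact absurd h.2.1 (by have := Net.in_ge_one c.hgp; omega)
  · exact absurd h.2.2 (by have := Net.out_ge_one c.hpi; omega)
  · exact h
  · exact absurd h.2.2 (by have := Net.out_ge_two c.hpi c.hpj c.hij; omega)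

lemma out_p : ∀ w, (p,w) ∈ N.A → w = i ∨ w = j :=
  Net.out_two c.p_tree.2.2 c.hpi c.hpj c.hij

lemma in_p : ∀ u, (u,p) ∈ N.A → u = g := fun _ hu => Net.in_unique c.p_tree.2.1 c.hgp hu

lemma g_ne_p : g ≠ p := fun h => Net.no_self c.phylo (h ▸ c.hgp)
lemma g_ne_i : g ≠ i := fun h => c.out_i p (h ▸ c.hgp)
lemma g_ne_j : g ≠ j := fun h => c.out_j p (h ▸ c.hgp)

lemma gj_not : (g,j) ∉ N.A := fun h => c.g_ne_p (c.in_j g h)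

lemma memV : ∀ v, v ∈ M.V ↔ v ∈ N.V ∧ v ≠ i ∧ v ≠ p := by
  intro v
  rw [c.hV]
  simp only [Finset.mem_erase]
  tauto

lemma memA : ∀ u v, (u,v) ∈ M.A ↔ ((u,v) ∈ N.A ∧ u ≠ p ∧ v ≠ p) ∨ (u = g ∧ v = j) := by
  intro u v
  rw [c.hA]
  simp only [Finset.mem_union, Finset.mem_sdiff, Finset.mem_insert, Finset.mem_singleton,
    Prod.mk.injEq]
  constructor
  · rintro (⟨hA, hR⟩ | ⟨rfl, rfl⟩)
    · push_neg at hR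
      left
      refine ⟨hA, ?_, ?_⟩
      · rintro rfl
        rcases c.out_p v hA with rfl | rfl
        · exact (hR.1 rfl rfl).elim
        · exact (hR.2.1 rfl rfl).elim
      · rintro rfl
        exact (hR.2.2 (c.in_p u hA) rfl).elim
    · right; exact ⟨rfl, rfl⟩
  · rintro (⟨hA, hu, hv⟩ | ⟨rfl, rfl⟩)
    · left
      refine ⟨hA, ?_⟩
      push_neg
      refine ⟨fun h => absurd h hu, fun h => absurd h hu, fun _ h => absurd h hv⟩
    · right; exact ⟨rfl, rfl⟩

lemma memA_N : ∀ u v, (u,v) ∈ N.A ↔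
    (((u,v) ∈ M.A ∧ ¬(u = g ∧ v = j)) ∨ (u = p ∧ v = i) ∨ (u = p ∧ v = j) ∨ (u = g ∧ v = p)) := by
  intro u v
  constructor
  · intro hA
    by_cases hu : u = p
    · subst hu
      rcases c.out_p v hA with rfl | rfl
      · right; left; exact ⟨rfl, rfl⟩
      · right; right; left; exact ⟨rfl, rfl⟩
    by_cases hv : v = p
    · subst hv
      right; right; right; exact ⟨c.in_p u hA, rfl⟩
    · left
      refine ⟨(c.memA u v).mpr (Or.inl ⟨hA, hu, hv⟩), ?_⟩
      rintro ⟨rfl, rfl⟩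
      exact c.gj_not hA
  · rintro (⟨hM, hne⟩ | ⟨rfl, rfl⟩ | ⟨rfl, rfl⟩ | ⟨rfl, rfl⟩)
    · rcases (c.memA u v).mp hM with ⟨hA, _⟩ | ⟨rfl, rfl⟩
      · exact hA
      · exact absurd ⟨rfl, rfl⟩ hne
    · exact c.hpi
    · exact c.hpj
    · exact c.hgp

lemma indeg_eq : ∀ v ∈ M.V, M.indeg v = N.indeg v := by
  intro v hv
  obtain ⟨hvV, hvi, hvp⟩ := (c.memV v).mp hv
  by_cases hvj : v = j
  · rw [hvj, c.leaf_j.2.1]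
    have h1 : M.A.filter (fun a => a.2 = j) = {(g,j)} := by
      ext a
      obtain ⟨u, w⟩ := a
      simp only [Finset.mem_filter, Finset.mem_singleton, Prod.mk.injEq]
      constructor
      · rintro ⟨hM, h2⟩
        rcases (c.memA u w).mp hM with ⟨hA, hup, _⟩ | ⟨hg, hj2⟩
        · exact absurd (c.in_j u (h2 ▸ hA)) hup
        · exact ⟨hg, h2⟩
      · rintro ⟨h1, h2⟩
        refine ⟨?_, h2⟩
        rw [h1, h2]
        exact (c.memA g j).mpr (Or.inr ⟨rfl, rfl⟩)
    unfold Net.indeg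
    rw [h1, Finset.card_singleton]
  · have h1 : M.A.filter (fun a => a.2 = v) = N.A.filter (fun a => a.2 = v) := by
      ext a
      obtain ⟨u, w⟩ := a
      simp only [Finset.mem_filter]
      constructor
      · rintro ⟨hM, h2⟩
        rcases (c.memA u w).mp hM with ⟨hA, _, _⟩ | ⟨hg, hj2⟩
        · exact ⟨hA, h2⟩
        · exact absurd (hj2 ▸ h2).symm hvj
      · rintro ⟨hA, h2⟩
        refine ⟨(c.memA u w).mpr (Or.inl ⟨hA, ?_, ?_⟩), h2⟩
        · intro hup
          rcases c.out_p w (hup ▸ hA) with h | h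
          · exact hvi (h ▸ h2).symm
          · exact hvj (h ▸ h2).symm
        · intro hwp
          exact hvp (hwp ▸ h2).symm
    unfold Net.indeg
    rw [h1]

lemma outdeg_eq : ∀ v ∈ M.V, M.outdeg v = N.outdeg v := by
  intro v hv
  obtain ⟨hvV, hvi, hvp⟩ := (c.memV v).mp hv
  by_cases hvg : v = g
  · rw [hvg]
    have h1 : M.A.filter (fun a => a.1 = g) =
        insert (g,j) ((N.A.filter (fun a => a.1 = g)).erase (g,p)) := by
      ext a
      obtain ⟨u, w⟩ := a
      simp only [Finset.mem_filter, Finset.mem_insert, Finset.mem_erase, ne_eq, Prod.mk.injEq]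
      constructor
      · rintro ⟨hM, h2⟩
        rcases (c.memA u w).mp hM with ⟨hA, _, hwp⟩ | ⟨hg, hj⟩
        · right
          exact ⟨fun hcon => hwp hcon.2, hA, h2⟩
        · left; exact ⟨hg, hj⟩
      · rintro (⟨hg, hj⟩ | ⟨hne, hA, h2⟩)
        · refine ⟨?_, hg⟩
          rw [hg, hj]
          exact (c.memA g j).mpr (Or.inr ⟨rfl, rfl⟩)
        · refine ⟨(c.memA u w).mpr (Or.inl ⟨hA, ?_, ?_⟩), h2⟩
          · intro hup
            exact c.g_ne_p (h2.symm.trans hup)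
          · intro hwp
            exact hne ⟨h2, hwp⟩
    unfold Net.outdeg
    rw [h1]
    have hgpF : (g,p) ∈ N.A.filter (fun a => a.1 = g) := Finset.mem_filter.mpr ⟨c.hgp, rfl⟩
    have hgjF : (g,j) ∉ (N.A.filter (fun a => a.1 = g)).erase (g,p) := by
      intro h
      exact c.gj_not (Finset.mem_filter.mp (Finset.mem_of_mem_erase h)).1
    rw [Finset.card_insert_of_notMem hgjF, Finset.card_erase_of_mem hgpF]
    have := Finset.card_pos.mpr ⟨(g,p), hgpF⟩
    omega
  · have h1 : M.A.filter (fun a => a.1 = v) = N.A.filter (fun a => a.1 = v) := by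
      ext a
      obtain ⟨u, w⟩ := a
      simp only [Finset.mem_filter]
      constructor
      · rintro ⟨hM, h2⟩
        rcases (c.memA u w).mp hM with ⟨hA, _, _⟩ | ⟨hg, hj⟩
        · exact ⟨hA, h2⟩
        · exact absurd (hg ▸ h2).symm hvg
      · rintro ⟨hA, h2⟩
        refine ⟨(c.memA u w).mpr (Or.inl ⟨hA, ?_, ?_⟩), h2⟩
        · intro hup
          exact hvp (h2.symm.trans hup)
        · intro hwp
          exact hvg (h2.symm.trans (c.in_p u (hwp ▸ hA)))
    unfold Net.outdeg
    rw [h1]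

lemma closure_M : ∀ a ∈ M.A, a.1 ∈ M.V ∧ a.2 ∈ M.V := by
  rintro ⟨u, v⟩ hM
  rcases (c.memA u v).mp hM with ⟨hA, hup, hvp⟩ | ⟨hg, hj⟩
  · obtain ⟨hu, hv⟩ := c.phylo.1 _ hA
    refine ⟨(c.memV u).mpr ⟨hu, ?_, hup⟩, (c.memV v).mpr ⟨hv, ?_, hvp⟩⟩
    · rintro rfl; exact c.out_i v hA
    · rintro rfl; exact absurd (c.in_i u hA) hup
  · simp only [hg, hj]
    exact ⟨(c.memV g).mpr ⟨c.g_mem, c.g_ne_i, c.g_ne_p⟩,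
      (c.memV j).mpr ⟨(c.phylo.1 _ c.hpj).2, fun h => c.hij h.symm, fun h => c.p_ne_j h.symm⟩⟩

lemma step_trans : ∀ u w, (u,w) ∈ M.A → Relation.TransGen (fun a b => (a,b) ∈ N.A) u w := by
  intro u w hM
  rcases (c.memA u w).mp hM with ⟨hA, _, _⟩ | ⟨hg, hj⟩
  · exact Relation.TransGen.single hA
  · rw [hg, hj]
    exact Relation.TransGen.head c.hgp (Relation.TransGen.single c.hpj)

lemma phylo_M : M.isPhylo := by
  obtain ⟨hclos, hacyc, ⟨r, hr, hru⟩, hclass⟩ := c.phylo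
  have hMono : ∀ a b, Relation.TransGen (fun u w => (u,w) ∈ M.A) a b →
      Relation.TransGen (fun u w => (u,w) ∈ N.A) a b := by
    intro a b h
    induction h with
    | single h => exact c.step_trans _ _ h
    | tail _ h ih => exact ih.trans (c.step_trans _ _ h)
    
  have hKey : ∀ v, Relation.TransGen (fun u w => (u,w) ∈ M.A) v v → False := fun v hv =>
    c.phylo.2.1 v (hMono v v hv)
  refine ⟨c.closure_M, fun v hv => hKey v hv, ⟨r, ?_, ?_⟩, ?_⟩
  · have hrM : r ∈ M.V := by
      refine (c.memV r).mpr ⟨hr.1, ?_, ?_⟩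
      · rintro rfl; have := c.leaf_i.2.1; have := hr.2.1; omega
      · rintro rfl; have := c.p_tree.2.1; have := hr.2.1; omega
    exact ⟨hrM, by rw [c.indeg_eq r hrM]; exact hr.2.1, by rw [c.outdeg_eq r hrM]; exact hr.2.2⟩
  · intro v hv
    refine hru v ?_
    obtain ⟨hvM, h1, h2⟩ := hv
    have hvN := ((c.memV v).mp hvM).1
    exact ⟨hvN, by rw [← c.indeg_eq v hvM]; exact h1, by rw [← c.outdeg_eq v hvM]; exact h2⟩
  · intro v hv
    have hvN := ((c.memV v).mp hv).1
    have hin := c.indeg_eq v hv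
    have hout := c.outdeg_eq v hv
    rcases hclass v hvN with h | h | h | h
    · exact Or.inl ⟨hv, hin.trans h.2.1, hout.trans h.2.2⟩
    · exact Or.inr (Or.inl ⟨hv, hin.trans h.2.1, hout.trans h.2.2⟩)
    · exact Or.inr (Or.inr (Or.inl ⟨hv, hin.trans h.2.1, hout.trans h.2.2⟩))
    · exact Or.inr (Or.inr (Or.inr ⟨hv, hin.trans h.2.1, hout.trans h.2.2⟩))

lemma leaves_M : M.leaves = N.leaves.erase i := by
  ext v
  simp only [Net.leaves, Finset.mem_erase, Finset.mem_filter]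
  constructor
  · rintro ⟨hvM, h1, h2⟩
    obtain ⟨hvN, hvi, hvp⟩ := (c.memV v).mp hvM
    rw [c.indeg_eq v hvM] at h1
    rw [c.outdeg_eq v hvM] at h2
    exact ⟨hvi, hvN, h1, h2⟩
  · rintro ⟨hvi, hvN, h1, h2⟩
    have hvp : v ≠ p := by rintro rfl; have := c.p_tree.2.2; omega
    have hvM : v ∈ M.V := (c.memV v).mpr ⟨hvN, hvi, hvp⟩
    rw [← c.indeg_eq v hvM] at h1
    rw [← c.outdeg_eq v hvM] at h2
    exact ⟨hvM, h1, h2⟩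

lemma i_leaf_N : i ∈ N.leaves :=
  Finset.mem_filter.mpr ⟨c.leaf_i.1, c.leaf_i.2.1, c.leaf_i.2.2⟩

lemma j_leaf_N : j ∈ N.leaves :=
  Finset.mem_filter.mpr ⟨c.leaf_j.1, c.leaf_j.2.1, c.leaf_j.2.2⟩

lemma j_leaf_M : j ∈ M.leaves := by
  rw [c.leaves_M]
  exact Finset.mem_erase.mpr ⟨fun h => c.hij h.symm, c.j_leaf_N⟩

lemma card_M : M.V.card + 2 = N.V.card := by
  rw [c.hV]
  have hiV : i ∈ N.V := c.leaf_i.1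
  have hpV : p ∈ N.V.erase i := Finset.mem_erase.mpr ⟨c.p_ne_i, c.p_mem⟩
  rw [Finset.card_erase_of_mem hpV, Finset.card_erase_of_mem hiV]
  have h1 := Finset.card_pos.mpr ⟨i, hiV⟩
  have h2 := Finset.card_pos.mpr ⟨p, hpV⟩
  rw [Finset.card_erase_of_mem hiV] at h2
  omega

end CC

end CherryCtx

lemma CC.in_j_M {N M : Net} {i j p g : ℕ} (c : CC N M i j p g) :
    ∀ u, (u,j) ∈ M.A → u = g := by
  intro u hu
  rcases (c.memA u j).mp hu with ⟨hA, hup, _⟩ | ⟨hg, _⟩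
  · exact absurd (c.in_j u hA) hup
  · exact hg

lemma card_insert_erase {α : Type*} [DecidableEq α] {s : Finset α} {a b : α}
    (ha : a ∈ s) (hb : b ∉ s) : (insert b (s.erase a)).card = s.card := by
  have h1 : b ∉ s.erase a := fun h => hb (Finset.mem_of_mem_erase h)
  rw [Finset.card_insert_of_notMem h1, Finset.card_erase_of_mem ha]
  have := Finset.card_pos.mpr ⟨a, ha⟩
  omega

lemma card_insert2_erase2 {α : Type*} [DecidableEq α] {s : Finset α} {a1 a2 b1 b2 : α}
    (ha1 : a1 ∈ s) (ha2 : a2 ∈ s) (ha : a1 ≠ a2) (hb1 : b1 ∉ s) (hb2 : b2 ∉ s)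
    (hb : b1 ≠ b2) : (insert b1 (insert b2 ((s.erase a1).erase a2))).card = s.card := by
  have h2 : a2 ∈ s.erase a1 := Finset.mem_erase.mpr ⟨fun h => ha h.symm, ha2⟩
  have hb2' : b2 ∉ (s.erase a1).erase a2 :=
    fun h => hb2 (Finset.mem_of_mem_erase (Finset.mem_of_mem_erase h))
  have hb1' : b1 ∉ insert b2 ((s.erase a1).erase a2) := by
    intro h
    rcases Finset.mem_insert.mp h with h | h
    · exact hb h
    · exact hb1 (Finset.mem_of_mem_erase (Finset.mem_of_mem_erase h))
  rw [Finset.card_insert_of_notMem hb1', Finset.card_insert_of_notMem hb2',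
    Finset.card_erase_of_mem h2, Finset.card_erase_of_mem ha1]
  have hsub : ({a1, a2} : Finset α) ⊆ s := by
    intro x hx
    rcases Finset.mem_insert.mp hx with rfl | hx
    · exact ha1
    · exact (Finset.mem_singleton.mp hx) ▸ ha2
  have hcard2 : ({a1, a2} : Finset α).card = 2 := by
    rw [Finset.card_insert_of_notMem (by simp [ha]), Finset.card_singleton]
  have := Finset.card_le_card hsub
  omega

section RetCtx

/-- Context for a reticulated-cherry reduction. -/
structure RC (N M : Net) (i j pi pj q g : ℕ) : Prop where
  phylo : N.isPhylo
  hij : i ≠ j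
  leaf_i : N.isLeaf i
  leaf_j : N.isLeaf j
  retic_pi : N.isRetic pi
  tree_pj : N.isTreeNode pj
  hpii : (pi,i) ∈ N.A
  hpjj : (pj,j) ∈ N.A
  hpjpi : (pj,pi) ∈ N.A
  hqpi : (q,pi) ∈ N.A
  hq_ne : q ≠ pj
  hgpj : (g,pj) ∈ N.A
  hV : M.V = (N.V.erase pi).erase pj
  hA : M.A = (N.A \ {(pj,pi), (q,pi), (pi,i), (g,pj), (pj,j)}) ∪ {(q,i), (g,j)}

namespace RC

lemma of_reduces {N M : Net} {i j : ℕ} (hN : N.isPhylo) (hc : N.isRetCherry i j)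
    (hr : RetCherryReduce N i j M) : ∃ pi pj q g, RC N M i j pi pj q g := by
  obtain ⟨pi, pj, q, g, hpii, hpjj, hpjpi, hqpi, hq_ne, hgpj, hV, hA⟩ := hr
  obtain ⟨hij, li, lj, pi', pj', h1', h2', hret, htree, _⟩ := hc
  have e1 : pi' = pi := Net.in_unique li.2.1 hpii h1'
  have e2 : pj' = pj := Net.in_unique lj.2.1 hpjj h2'
  exact ⟨pi, pj, q, g, ⟨hN, hij, li, lj, e1 ▸ hret, e2 ▸ htree,
    hpii, hpjj, hpjpi, hqpi, hq_ne, hgpj, hV, hA⟩⟩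

variable {N M : Net} {i j pi pj q g : ℕ} (c : RC N M i j pi pj q g)
include c

lemma in_i : ∀ u, (u,i) ∈ N.A → u = pi := fun _ hu => Net.in_unique c.leaf_i.2.1 c.hpii hu
lemma in_j : ∀ u, (u,j) ∈ N.A → u = pj := fun _ hu => Net.in_unique c.leaf_j.2.1 c.hpjj hu
lemma out_i : ∀ w, (i,w) ∈ N.A → False := fun _ hw => Net.out_zero c.leaf_i.2.2 hw
lemma out_j : ∀ w, (j,w) ∈ N.A → False := fun _ hw => Net.out_zero c.leaf_j.2.2 hw
lemma out_pi : ∀ w, (pi,w) ∈ N.A → w = i := fun _ hw => Net.out_unique c.retic_pi.2.2 c.hpii hw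
lemma in_pi : ∀ u, (u,pi) ∈ N.A → u = pj ∨ u = q :=
  Net.in_two c.retic_pi.2.1 c.hpjpi c.hqpi (fun h => c.hq_ne h.symm)
lemma in_pj : ∀ u, (u,pj) ∈ N.A → u = g := fun _ hu => Net.in_unique c.tree_pj.2.1 c.hgpj hu

lemma pi_ne_i : pi ≠ i := fun h => c.out_i i (h ▸ c.hpii)
lemma pi_ne_j : pi ≠ j := fun h => c.out_j i (h ▸ c.hpii)
lemma pj_ne_j : pj ≠ j := fun h => c.out_j j (h ▸ c.hpjj)
lemma pj_ne_i : pj ≠ i := fun h => c.out_i j (h ▸ c.hpjj)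
lemma pi_ne_pj : pi ≠ pj := by
  intro h
  have h1 := c.retic_pi.2.1
  have h2 := c.tree_pj.2.1
  rw [h] at h1
  omega

lemma out_pj : ∀ w, (pj,w) ∈ N.A → w = j ∨ w = pi :=
  Net.out_two c.tree_pj.2.2 c.hpjj c.hpjpi (fun h => c.pi_ne_j h.symm)

lemma q_ne_i : q ≠ i := fun h => c.out_i pi (h ▸ c.hqpi)
lemma q_ne_j : q ≠ j := fun h => c.out_j pi (h ▸ c.hqpi)
lemma q_ne_pi : q ≠ pi := fun h => Net.no_self c.phylo (h ▸ c.hqpi)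
lemma g_ne_i : g ≠ i := fun h => c.out_i pj (h ▸ c.hgpj)
lemma g_ne_j : g ≠ j := fun h => c.out_j pj (h ▸ c.hgpj)
lemma g_ne_pj : g ≠ pj := fun h => Net.no_self c.phylo (h ▸ c.hgpj)
lemma g_ne_pi : g ≠ pi := by
  intro h
  have := c.out_pi pj (h ▸ c.hgpj)
  exact c.pj_ne_i this

lemma qi_not : (q,i) ∉ N.A := fun h => c.q_ne_pi (c.in_i q h)
lemma gj_not : (g,j) ∉ N.A := fun h => c.g_ne_pj (c.in_j g h)

lemma pi_mem : pi ∈ N.V := c.retic_pi.1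
lemma pj_mem : pj ∈ N.V := c.tree_pj.1
lemma q_mem : q ∈ N.V := (c.phylo.1 _ c.hqpi).1
lemma g_mem : g ∈ N.V := (c.phylo.1 _ c.hgpj).1

lemma memV : ∀ v, v ∈ M.V ↔ v ∈ N.V ∧ v ≠ pi ∧ v ≠ pj := by
  intro v
  rw [c.hV]
  simp only [Finset.mem_erase]
  tauto

lemma memA : ∀ u v, (u,v) ∈ M.A ↔
    ((u,v) ∈ N.A ∧ u ≠ pi ∧ v ≠ pi ∧ u ≠ pj ∧ v ≠ pj) ∨ (u = q ∧ v = i) ∨ (u = g ∧ v = j) := by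
  intro u v
  rw [c.hA]
  simp only [Finset.mem_union, Finset.mem_sdiff, Finset.mem_insert, Finset.mem_singleton,
    Prod.mk.injEq]
  constructor
  · rintro (⟨hA, hR⟩ | ⟨hu, hv⟩ | ⟨hu, hv⟩)
    · push_neg at hR
      left
      refine ⟨hA, ?_, ?_, ?_, ?_⟩
      · intro hu
        exact (hR.2.2.1 hu (c.out_pi v (hu ▸ hA))).elim
      · intro hv
        rcases c.in_pi u (hv ▸ hA) with h | h
        · exact (hR.1 h hv).elim
        · exact (hR.2.1 h hv).elim
      · intro hu
        rcases c.out_pj v (hu ▸ hA) with h | h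
        · exact (hR.2.2.2.2 hu h).elim
        · exact (hR.1 hu h).elim
      · intro hv
        exact (hR.2.2.2.1 (c.in_pj u (hv ▸ hA)) hv).elim
    · exact Or.inr (Or.inl ⟨hu, hv⟩)
    · exact Or.inr (Or.inr ⟨hu, hv⟩)
  · rintro (⟨hA, h1, h2, h3, h4⟩ | ⟨hu, hv⟩ | ⟨hu, hv⟩)
    · left
      refine ⟨hA, ?_⟩
      push_neg
      exact ⟨fun h => absurd h h3, fun _ h => absurd h h2, fun h => absurd h h1,
        fun _ h => absurd h h4, fun h => absurd h h3⟩
    · right; left; exact ⟨hu, hv⟩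
    · right; right; exact ⟨hu, hv⟩

lemma memA_N : ∀ u v, (u,v) ∈ N.A ↔
    (((u,v) ∈ M.A ∧ ¬(u = q ∧ v = i) ∧ ¬(u = g ∧ v = j)) ∨
      (u = pj ∧ v = pi) ∨ (u = q ∧ v = pi) ∨ (u = pi ∧ v = i) ∨
      (u = g ∧ v = pj) ∨ (u = pj ∧ v = j)) := by
  intro u v
  constructor
  · intro hA
    by_cases hu1 : u = pi
    · right; right; right; left; exact ⟨hu1, c.out_pi v (hu1 ▸ hA)⟩
    by_cases hv1 : v = pi
    · rcases c.in_pi u (hv1 ▸ hA) with h | h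
      · right; left; exact ⟨h, hv1⟩
      · right; right; left; exact ⟨h, hv1⟩
    by_cases hu2 : u = pj
    · rcases c.out_pj v (hu2 ▸ hA) with h | h
      · right; right; right; right; right; exact ⟨hu2, h⟩
      · exact absurd h hv1
    by_cases hv2 : v = pj
    · right; right; right; right; left; exact ⟨c.in_pj u (hv2 ▸ hA), hv2⟩
    · left
      refine ⟨(c.memA u v).mpr (Or.inl ⟨hA, hu1, hv1, hu2, hv2⟩), ?_, ?_⟩
      · rintro ⟨rfl, rfl⟩; exact c.qi_not hA
      · rintro ⟨rfl, rfl⟩; exact c.gj_not hA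
  · rintro (⟨hM, hn1, hn2⟩ | ⟨hu, hv⟩ | ⟨hu, hv⟩ | ⟨hu, hv⟩ | ⟨hu, hv⟩ | ⟨hu, hv⟩)
    · rcases (c.memA u v).mp hM with ⟨hA, _⟩ | ⟨hu, hv⟩ | ⟨hu, hv⟩
      · exact hA
      · exact absurd ⟨hu, hv⟩ hn1
      · exact absurd ⟨hu, hv⟩ hn2
    · rw [hu, hv]; exact c.hpjpi
    · rw [hu, hv]; exact c.hqpi
    · rw [hu, hv]; exact c.hpii
    · rw [hu, hv]; exact c.hgpj
    · rw [hu, hv]; exact c.hpjj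

lemma in_i_M : ∀ u, (u,i) ∈ M.A → u = q := by
  intro u hu
  rcases (c.memA u i).mp hu with ⟨hA, hu1, _⟩ | ⟨hq, _⟩ | ⟨_, hj⟩
  · exact absurd (c.in_i u hA) hu1
  · exact hq
  · exact absurd hj c.hij

lemma in_j_M : ∀ u, (u,j) ∈ M.A → u = g := by
  intro u hu
  rcases (c.memA u j).mp hu with ⟨hA, _, _, hu2, _⟩ | ⟨_, hj⟩ | ⟨hg, _⟩
  · exact absurd (c.in_j u hA) hu2
  · exact absurd hj.symm c.hij
  · exact hg

end RC

end RetCtx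

namespace RC

variable {N M : Net} {i j pi pj q g : ℕ} (c : RC N M i j pi pj q g)
include c

lemma indeg_eq : ∀ v ∈ M.V, M.indeg v = N.indeg v := by
  intro v hv
  obtain ⟨hvV, hv1, hv2⟩ := (c.memV v).mp hv
  by_cases hvi : v = i
  · rw [hvi, c.leaf_i.2.1]
    have h1 : M.A.filter (fun a => a.2 = i) = {(q,i)} := by
      ext a
      obtain ⟨u, w⟩ := a
      simp only [Finset.mem_filter, Finset.mem_singleton, Prod.mk.injEq]
      constructor
      · rintro ⟨hM, h2⟩
        exact ⟨c.in_i_M u (h2 ▸ hM), h2⟩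
      · rintro ⟨h1, h2⟩
        refine ⟨?_, h2⟩
        rw [h1, h2]
        exact (c.memA q i).mpr (Or.inr (Or.inl ⟨rfl, rfl⟩))
    unfold Net.indeg
    rw [h1, Finset.card_singleton]
  by_cases hvj : v = j
  · rw [hvj, c.leaf_j.2.1]
    have h1 : M.A.filter (fun a => a.2 = j) = {(g,j)} := by
      ext a
      obtain ⟨u, w⟩ := a
      simp only [Finset.mem_filter, Finset.mem_singleton, Prod.mk.injEq]
      constructor
      · rintro ⟨hM, h2⟩
        exact ⟨c.in_j_M u (h2 ▸ hM), h2⟩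
      · rintro ⟨h1, h2⟩
        refine ⟨?_, h2⟩
        rw [h1, h2]
        exact (c.memA g j).mpr (Or.inr (Or.inr ⟨rfl, rfl⟩))
    unfold Net.indeg
    rw [h1, Finset.card_singleton]
  · have h1 : M.A.filter (fun a => a.2 = v) = N.A.filter (fun a => a.2 = v) := by
      ext a
      obtain ⟨u, w⟩ := a
      simp only [Finset.mem_filter]
      constructor
      · rintro ⟨hM, h2⟩
        rcases (c.memA u w).mp hM with ⟨hA, _⟩ | ⟨hq, hi⟩ | ⟨hg, hj⟩
        · exact ⟨hA, h2⟩
        · exact absurd (hi ▸ h2).symm hvi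
        · exact absurd (hj ▸ h2).symm hvj
      · rintro ⟨hA, h2⟩
        refine ⟨(c.memA u w).mpr (Or.inl ⟨hA, ?_, ?_, ?_, ?_⟩), h2⟩
        · intro hu
          exact hvi ((c.out_pi w (hu ▸ hA)) ▸ h2).symm
        · intro hw
          exact hv1 (hw ▸ h2).symm
        · intro hu
          rcases c.out_pj w (hu ▸ hA) with h | h
          · exact hvj (h ▸ h2).symm
          · exact hv1 (h ▸ h2).symm
        · intro hw
          exact hv2 (hw ▸ h2).symm
    unfold Net.indeg
    rw [h1]

lemma outdeg_eq : ∀ v ∈ M.V, M.outdeg v = N.outdeg v := by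
  intro v hv
  obtain ⟨hvV, hv1, hv2⟩ := (c.memV v).mp hv
  by_cases hvi : v = i
  · rw [hvi, c.leaf_i.2.2]
    have h1 : M.A.filter (fun a => a.1 = i) = ∅ := by
      rw [Finset.filter_eq_empty_iff]
      rintro ⟨u, w⟩ hM h2
      simp only at h2
      rcases (c.memA u w).mp hM with ⟨hA, _⟩ | ⟨hq, _⟩ | ⟨hg, _⟩
      · exact c.out_i w (h2 ▸ hA)
      · exact c.q_ne_i (hq.symm.trans h2)
      · exact c.g_ne_i (hg.symm.trans h2)
    unfold Net.outdeg
    rw [h1, Finset.card_empty]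
  by_cases hvj : v = j
  · rw [hvj, c.leaf_j.2.2]
    have h1 : M.A.filter (fun a => a.1 = j) = ∅ := by
      rw [Finset.filter_eq_empty_iff]
      rintro ⟨u, w⟩ hM h2
      simp only at h2
      rcases (c.memA u w).mp hM with ⟨hA, _⟩ | ⟨hq, _⟩ | ⟨hg, _⟩
      · exact c.out_j w (h2 ▸ hA)
      · exact c.q_ne_j (hq.symm.trans h2)
      · exact c.g_ne_j (hg.symm.trans h2)
    unfold Net.outdeg
    rw [h1, Finset.card_empty]
  by_cases hvq : v = q
  · by_cases hqg : q = g
    · rw [hvq]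
      have h1 : M.A.filter (fun a => a.1 = q) = insert (q,i) (insert (q,j)
          (((N.A.filter (fun a => a.1 = q)).erase (q,pi)).erase (q,pj))) := by
        ext a
        obtain ⟨u, w⟩ := a
        simp only [Finset.mem_filter, Finset.mem_insert, Finset.mem_erase, ne_eq,
          Prod.mk.injEq]
        constructor
        · rintro ⟨hM, h2⟩
          rcases (c.memA u w).mp hM with ⟨hA, _, hw1, _, hw2⟩ | ⟨hq', hi'⟩ | ⟨hg', hj'⟩
          · right; right
            exact ⟨fun h => hw2 h.2, fun h => hw1 h.2, hA, h2⟩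
          · left; exact ⟨hq', hi'⟩
          · right; left; exact ⟨hg'.trans hqg.symm, hj'⟩
        · rintro (⟨hu, hw⟩ | ⟨hu, hw⟩ | ⟨hn1, hn2, hA, h2⟩)
          · rw [hu, hw]
            exact ⟨(c.memA q i).mpr (Or.inr (Or.inl ⟨rfl, rfl⟩)), rfl⟩
          · rw [hu, hw]
            exact ⟨(c.memA q j).mpr (Or.inr (Or.inr ⟨hqg, rfl⟩)), rfl⟩
          · refine ⟨(c.memA u w).mpr (Or.inl ⟨hA, ?_, ?_, ?_, ?_⟩), h2⟩
            · intro hu; exact c.q_ne_pi (h2.symm.trans hu)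
            · intro hw; exact hn2 ⟨h2, hw⟩
            · intro hu; exact c.hq_ne (h2.symm.trans hu)
            · intro hw; exact hn1 ⟨h2, hw⟩
      unfold Net.outdeg
      rw [h1]
      refine card_insert2_erase2 ?_ ?_ ?_ ?_ ?_ ?_
      · exact Finset.mem_filter.mpr ⟨c.hqpi, rfl⟩
      · exact Finset.mem_filter.mpr ⟨hqg ▸ c.hgpj, rfl⟩
      · simp [c.pi_ne_pj]
      · intro h; exact c.qi_not (Finset.mem_filter.mp h).1
      · intro h; exact c.gj_not (hqg ▸ (Finset.mem_filter.mp h).1)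
      · simp [c.hij]
    · rw [hvq]
      have h1 : M.A.filter (fun a => a.1 = q) =
          insert (q,i) ((N.A.filter (fun a => a.1 = q)).erase (q,pi)) := by
        ext a
        obtain ⟨u, w⟩ := a
        simp only [Finset.mem_filter, Finset.mem_insert, Finset.mem_erase, ne_eq,
          Prod.mk.injEq]
        constructor
        · rintro ⟨hM, h2⟩
          rcases (c.memA u w).mp hM with ⟨hA, _, hw1, _, _⟩ | ⟨hq', hi'⟩ | ⟨hg', hj'⟩
          · right
            exact ⟨fun h => hw1 h.2, hA, h2⟩
          · left; exact ⟨hq', hi'⟩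
          · exact absurd (h2.symm.trans hg') hqg
        · rintro (⟨hu, hw⟩ | ⟨hn1, hA, h2⟩)
          · rw [hu, hw]
            exact ⟨(c.memA q i).mpr (Or.inr (Or.inl ⟨rfl, rfl⟩)), rfl⟩
          · refine ⟨(c.memA u w).mpr (Or.inl ⟨hA, ?_, ?_, ?_, ?_⟩), h2⟩
            · intro hu; exact c.q_ne_pi (h2.symm.trans hu)
            · intro hw; exact hn1 ⟨h2, hw⟩
            · intro hu; exact c.hq_ne (h2.symm.trans hu)
            · intro hw
              exact hqg (h2.symm.trans (c.in_pj u (hw ▸ hA)))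
      unfold Net.outdeg
      rw [h1]
      refine card_insert_erase (Finset.mem_filter.mpr ⟨c.hqpi, rfl⟩) ?_
      intro h; exact c.qi_not (Finset.mem_filter.mp h).1
  by_cases hvg : v = g
  · rw [hvg]
    have h1 : M.A.filter (fun a => a.1 = g) =
        insert (g,j) ((N.A.filter (fun a => a.1 = g)).erase (g,pj)) := by
      ext a
      obtain ⟨u, w⟩ := a
      simp only [Finset.mem_filter, Finset.mem_insert, Finset.mem_erase, ne_eq,
        Prod.mk.injEq]
      constructor
      · rintro ⟨hM, h2⟩
        rcases (c.memA u w).mp hM with ⟨hA, _, _, _, hw2⟩ | ⟨hq', hi'⟩ | ⟨hg', hj'⟩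
        · right
          exact ⟨fun h => hw2 h.2, hA, h2⟩
        · exact absurd ((h2 ▸ hq') :).symm (fun h => hvq (hvg.trans h.symm))
        · left; exact ⟨hg', hj'⟩
      · rintro (⟨hu, hw⟩ | ⟨hn1, hA, h2⟩)
        · rw [hu, hw]
          exact ⟨(c.memA g j).mpr (Or.inr (Or.inr ⟨rfl, rfl⟩)), rfl⟩
        · refine ⟨(c.memA u w).mpr (Or.inl ⟨hA, ?_, ?_, ?_, ?_⟩), h2⟩
          · intro hu; exact c.g_ne_pi (h2.symm.trans hu)
          · intro hw
            rcases c.in_pi u (hw ▸ hA) with h | h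
            · exact c.g_ne_pj (h2.symm.trans h)
            · exact hvq (hvg.trans (h2.symm.trans h))
          · intro hu; exact c.g_ne_pj (h2.symm.trans hu)
          · intro hw; exact hn1 ⟨h2, hw⟩
    unfold Net.outdeg
    rw [h1]
    refine card_insert_erase (Finset.mem_filter.mpr ⟨c.hgpj, rfl⟩) ?_
    intro h; exact c.gj_not (Finset.mem_filter.mp h).1
  · have h1 : M.A.filter (fun a => a.1 = v) = N.A.filter (fun a => a.1 = v) := by
      ext a
      obtain ⟨u, w⟩ := a
      simp only [Finset.mem_filter]
      constructor
      · rintro ⟨hM, h2⟩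
        rcases (c.memA u w).mp hM with ⟨hA, _⟩ | ⟨hq', _⟩ | ⟨hg', _⟩
        · exact ⟨hA, h2⟩
        · exact absurd (hq' ▸ h2).symm hvq
        · exact absurd (hg' ▸ h2).symm hvg
      · rintro ⟨hA, h2⟩
        refine ⟨(c.memA u w).mpr (Or.inl ⟨hA, ?_, ?_, ?_, ?_⟩), h2⟩
        · intro hu; exact hv1 (h2.symm.trans hu)
        · intro hw
          rcases c.in_pi u (hw ▸ hA) with h | h
          · exact hv2 (h2.symm.trans h)
          · exact hvq (h2.symm.trans h)
        · intro hu; exact hv2 (h2.symm.trans hu)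
        · intro hw
          exact hvg (h2.symm.trans (c.in_pj u (hw ▸ hA)))
    unfold Net.outdeg
    rw [h1]

lemma closure_M : ∀ a ∈ M.A, a.1 ∈ M.V ∧ a.2 ∈ M.V := by
  rintro ⟨u, v⟩ hM
  rcases (c.memA u v).mp hM with ⟨hA, h1, h2, h3, h4⟩ | ⟨hu, hv⟩ | ⟨hu, hv⟩
  · obtain ⟨hu, hv⟩ := c.phylo.1 _ hA
    exact ⟨(c.memV u).mpr ⟨hu, h1, h3⟩, (c.memV v).mpr ⟨hv, h2, h4⟩⟩
  · rw [hu, hv]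
    exact ⟨(c.memV q).mpr ⟨c.q_mem, c.q_ne_pi, c.hq_ne⟩,
      (c.memV i).mpr ⟨c.leaf_i.1, fun h => c.pi_ne_i h.symm, fun h => c.pj_ne_i h.symm⟩⟩
  · rw [hu, hv]
    exact ⟨(c.memV g).mpr ⟨c.g_mem, c.g_ne_pi, c.g_ne_pj⟩,
      (c.memV j).mpr ⟨c.leaf_j.1, fun h => c.pi_ne_j h.symm, fun h => c.pj_ne_j h.symm⟩⟩

lemma step_trans : ∀ u w, (u,w) ∈ M.A → Relation.TransGen (fun a b => (a,b) ∈ N.A) u w := by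
  intro u w hM
  rcases (c.memA u w).mp hM with ⟨hA, _⟩ | ⟨hu, hw⟩ | ⟨hu, hw⟩
  · exact Relation.TransGen.single hA
  · rw [hu, hw]
    exact Relation.TransGen.head c.hqpi (Relation.TransGen.single c.hpii)
  · rw [hu, hw]
    exact Relation.TransGen.head c.hgpj (Relation.TransGen.single c.hpjj)

lemma phylo_M : M.isPhylo := by
  obtain ⟨hclos, hacyc, ⟨r, hr, hru⟩, hclass⟩ := c.phylo
  have hMono : ∀ a b, Relation.TransGen (fun u w => (u,w) ∈ M.A) a b →
      Relation.TransGen (fun u w => (u,w) ∈ N.A) a b := by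
    intro a b h
    induction h with
    | single h => exact c.step_trans _ _ h
    | tail _ h ih => exact ih.trans (c.step_trans _ _ h)
  refine ⟨c.closure_M, fun v hv => c.phylo.2.1 v (hMono v v hv), ⟨r, ?_, ?_⟩, ?_⟩
  · have hrM : r ∈ M.V := by
      refine (c.memV r).mpr ⟨hr.1, ?_, ?_⟩
      · rintro rfl; have := c.retic_pi.2.1; have := hr.2.1; omega
      · rintro rfl; have := c.tree_pj.2.1; have := hr.2.1; omega
    exact ⟨hrM, (c.indeg_eq r hrM).trans hr.2.1, (c.outdeg_eq r hrM).trans hr.2.2⟩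
  · intro v hv
    refine hru v ?_
    obtain ⟨hvM, h1, h2⟩ := hv
    exact ⟨((c.memV v).mp hvM).1, (c.indeg_eq v hvM).symm.trans h1,
      (c.outdeg_eq v hvM).symm.trans h2⟩
  · intro v hv
    have hvN := ((c.memV v).mp hv).1
    have hin := c.indeg_eq v hv
    have hout := c.outdeg_eq v hv
    rcases hclass v hvN with h | h | h | h
    · exact Or.inl ⟨hv, hin.trans h.2.1, hout.trans h.2.2⟩
    · exact Or.inr (Or.inl ⟨hv, hin.trans h.2.1, hout.trans h.2.2⟩)
    · exact Or.inr (Or.inr (Or.inl ⟨hv, hin.trans h.2.1, hout.trans h.2.2⟩))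
    · exact Or.inr (Or.inr (Or.inr ⟨hv, hin.trans h.2.1, hout.trans h.2.2⟩))

lemma leaves_M : M.leaves = N.leaves := by
  ext v
  simp only [Net.leaves, Finset.mem_filter]
  constructor
  · rintro ⟨hvM, h1, h2⟩
    exact ⟨((c.memV v).mp hvM).1, (c.indeg_eq v hvM).symm.trans h1,
      (c.outdeg_eq v hvM).symm.trans h2⟩
  · rintro ⟨hvN, h1, h2⟩
    have hv1 : v ≠ pi := by rintro rfl; have := c.retic_pi.2.1; omega
    have hv2 : v ≠ pj := by rintro rfl; have := c.tree_pj.2.2; omega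
    have hvM : v ∈ M.V := (c.memV v).mpr ⟨hvN, hv1, hv2⟩
    exact ⟨hvM, (c.indeg_eq v hvM).trans h1, (c.outdeg_eq v hvM).trans h2⟩

lemma i_leaf_N : i ∈ N.leaves :=
  Finset.mem_filter.mpr ⟨c.leaf_i.1, c.leaf_i.2.1, c.leaf_i.2.2⟩

lemma j_leaf_N : j ∈ N.leaves :=
  Finset.mem_filter.mpr ⟨c.leaf_j.1, c.leaf_j.2.1, c.leaf_j.2.2⟩

lemma i_leaf_M : i ∈ M.leaves := by rw [c.leaves_M]; exact c.i_leaf_N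
lemma j_leaf_M : j ∈ M.leaves := by rw [c.leaves_M]; exact c.j_leaf_N

lemma card_M : M.V.card + 2 = N.V.card := by
  rw [c.hV]
  have hpiV : pi ∈ N.V := c.pi_mem
  have hpjV : pj ∈ N.V.erase pi := Finset.mem_erase.mpr ⟨fun h => c.pi_ne_pj h.symm, c.pj_mem⟩
  rw [Finset.card_erase_of_mem hpjV, Finset.card_erase_of_mem hpiV]
  have h1 := Finset.card_pos.mpr ⟨pi, hpiV⟩
  have h2 := Finset.card_pos.mpr ⟨pj, hpjV⟩
  rw [Finset.card_erase_of_mem hpiV] at h2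
  omega

end RC

section SeqFacts

lemma trivial_leaves {T : Net} {l : ℕ} (h : isTrivial T l) : T.leaves = {l} := by
  obtain ⟨r, hrl, hV, hA⟩ := h
  ext v
  simp only [Net.leaves, Finset.mem_filter, hV, hA, Net.indeg, Net.outdeg,
    Finset.filter_singleton, Finset.mem_insert, Finset.mem_singleton]
  constructor
  · rintro ⟨hv, h1, h2⟩
    rcases hv with rfl | rfl
    · rw [if_neg (fun hh : l = v => hrl hh.symm)] at h1
      simp at h1
    · rfl
  · rintro rfl
    refine ⟨Or.inr rfl, ?_, ?_⟩
    · rw [if_pos rfl]; exact Finset.card_singleton _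
    · rw [if_neg hrl]; exact Finset.card_empty

lemma trivial_card {T : Net} {l : ℕ} (h : isTrivial T l) : T.V.card = 2 := by
  obtain ⟨r, hrl, hV, hA⟩ := h
  rw [hV, Finset.card_insert_of_notMem (by simp [hrl]), Finset.card_singleton]

lemma trivial_iso {T T' : Net} {l : ℕ} (h : isTrivial T l) (h' : isTrivial T' l) :
    NetIso T T' := by
  obtain ⟨r, hrl, hV, hA⟩ := h
  obtain ⟨r', hrl', hV', hA'⟩ := h'
  have hlr : l ≠ r := fun hh => hrl hh.symm
  have hlr' : l ≠ r' := fun hh => hrl' hh.symm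
  refine ⟨fun v => if v = r then r' else v, ⟨?_, ?_, ?_⟩, ?_, ?_⟩
  · intro v hv
    simp only [Finset.coe_insert, Set.mem_insert_iff, Finset.coe_singleton,
      Set.mem_singleton_iff, hV, hV'] at hv ⊢
    rcases hv with hv | hv
    · rw [hv]; simp
    · rw [hv]; simp [hlr]
  · intro a ha b hb hab
    simp only [Finset.coe_insert, Set.mem_insert_iff, Finset.coe_singleton,
      Set.mem_singleton_iff, hV] at ha hb
    rcases ha with ha | ha <;> rcases hb with hb | hb
    · rw [ha, hb]
    · rw [ha, hb] at hab ⊢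
      simp [hlr] at hab
      exact absurd hab.symm hlr'
    · rw [ha, hb] at hab ⊢
      simp [hlr] at hab
      exact absurd hab hlr'
    · rw [ha, hb]
  · intro v hv
    simp only [Finset.coe_insert, Set.mem_insert_iff, Finset.coe_singleton,
      Set.mem_singleton_iff, hV'] at hv
    rcases hv with hv | hv
    · exact ⟨r, by simp [hV], by simp [hv]⟩
    · exact ⟨l, by simp [hV], by simp [hlr, hv]⟩
  · intro u hu v hv
    rw [hA, hA']
    rw [hV] at hu hv
    simp only [Finset.mem_insert, Finset.mem_singleton] at hu hv
    rcases hu with hu | hu <;> rcases hv with hv | hv <;> rw [hu, hv] <;>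
      simp [Prod.ext_iff, hrl, hrl', hlr, hlr']
  · intro x hx
    rw [trivial_leaves ⟨r, hrl, hV, hA⟩, Finset.mem_singleton] at hx
    rw [hx]
    simp [hlr]

lemma reduces_ctx {N M : Net} {s : ℕ × ℕ} (hN : N.isPhylo) (h : Reduces N s M) :
    M.isPhylo ∧ M.V.card + 2 = N.V.card := by
  rcases h with ⟨hc, hr⟩ | ⟨hc, hr⟩
  · obtain ⟨p, g, c⟩ := CC.of_reduces hN hc hr
    exact ⟨c.phylo_M, c.card_M⟩
  · obtain ⟨pi, pj, q, g, c⟩ := RC.of_reduces hN hc hr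
    exact ⟨c.phylo_M, c.card_M⟩

lemma seq_phylo_card {S : List (ℕ × ℕ)} {N T : Net} (h : ReducesSeq N S T) :
    N.isPhylo → T.isPhylo ∧ T.V.card + 2 * S.length = N.V.card := by
  induction h with
  | nil N => exact fun hN => ⟨hN, by simp⟩
  | cons hred hseq ih =>
    intro hN
    obtain ⟨hM, hcard⟩ := reduces_ctx hN hred
    obtain ⟨hT, hcard'⟩ := ih hM
    refine ⟨hT, ?_⟩
    simp only [List.length_cons]
    omega

/-- The set of taxa appearing in a sequence of pairs. -/
def comps : List (ℕ × ℕ) → Finset ℕ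
  | [] => ∅
  | s :: S => insert s.1 (insert s.2 (comps S))

lemma leaves_det {S : List (ℕ × ℕ)} {N T : Net} {l : ℕ} (h : ReducesSeq N S T) :
    N.isPhylo → isTrivial T l → S ≠ [] → N.leaves = comps S := by
  induction h with
  | nil N => exact fun _ _ hS => absurd rfl hS
  | @cons N M T s S hred hseq ih =>
    intro hN ht _
    rcases hred with ⟨hc, hr⟩ | ⟨hc, hr⟩
    · obtain ⟨p, g, c⟩ := CC.of_reduces hN hc hr
      have hNl : N.leaves = insert s.1 M.leaves := by
        rw [c.leaves_M, Finset.insert_erase c.i_leaf_N]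
      by_cases hS' : S = []
      · subst hS'
        cases hseq
        have hMl : M.leaves = {l} := trivial_leaves ht
        have hjl : s.2 = l := by
          have := c.j_leaf_M
          rw [hMl, Finset.mem_singleton] at this
          exact this
        show N.leaves = insert s.1 (insert s.2 ∅)
        rw [hNl, hMl, hjl]
        rfl
      · have hMl := ih c.phylo_M ht hS'
        have h2 : insert s.2 (comps S) = comps S :=
          Finset.insert_eq_self.mpr (hMl ▸ c.j_leaf_M)
        show N.leaves = insert s.1 (insert s.2 (comps S))
        rw [hNl, hMl, h2]
    · obtain ⟨pi, pj, q, g, c⟩ := RC.of_reduces hN hc hr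
      by_cases hS' : S = []
      · subst hS'
        cases hseq
        have hMl : M.leaves = {l} := trivial_leaves ht
        have h1 : s.1 = l := by
          have := c.i_leaf_M; rw [hMl, Finset.mem_singleton] at this; exact this
        have h2 : s.2 = l := by
          have := c.j_leaf_M; rw [hMl, Finset.mem_singleton] at this; exact this
        exact absurd (h1.trans h2.symm) c.hij
      · have hMl := ih c.phylo_M ht hS'
        have h2 : insert s.2 (comps S) = comps S :=
          Finset.insert_eq_self.mpr (hMl ▸ c.j_leaf_M)
        have h1 : insert s.1 (comps S) = comps S :=
          Finset.insert_eq_self.mpr (hMl ▸ c.i_leaf_M)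
        show N.leaves = insert s.1 (insert s.2 (comps S))
        rw [← c.leaves_M, hMl, h2, h1]

end SeqFacts

namespace CC

variable {N M : Net} {i j p g : ℕ} (c : CC N M i j p g)
include c

lemma g_mem_M : g ∈ M.V := (c.memV g).mpr ⟨c.g_mem, c.g_ne_i, c.g_ne_p⟩
lemma j_mem_M : j ∈ M.V :=
  (c.memV j).mpr ⟨c.leaf_j.1, fun h => c.hij h.symm, fun h => c.p_ne_j h.symm⟩
lemma i_not_M : i ∉ M.V := fun h => ((c.memV i).mp h).2.1 rfl
lemma p_not_M : p ∉ M.V := fun h => ((c.memV p).mp h).2.2 rfl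
lemma gj_mem : (g,j) ∈ M.A := (c.memA g j).mpr (Or.inr ⟨rfl, rfl⟩)
lemma i_mem_N : i ∈ N.V := c.leaf_i.1

end CC

namespace RC

variable {N M : Net} {i j pi pj q g : ℕ} (c : RC N M i j pi pj q g)
include c

lemma q_mem_M : q ∈ M.V := (c.memV q).mpr ⟨c.q_mem, c.q_ne_pi, c.hq_ne⟩
lemma g_mem_M : g ∈ M.V := (c.memV g).mpr ⟨c.g_mem, c.g_ne_pi, c.g_ne_pj⟩
lemma i_mem_M : i ∈ M.V :=
  (c.memV i).mpr ⟨c.leaf_i.1, fun h => c.pi_ne_i h.symm, fun h => c.pj_ne_i h.symm⟩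
lemma j_mem_M : j ∈ M.V :=
  (c.memV j).mpr ⟨c.leaf_j.1, fun h => c.pi_ne_j h.symm, fun h => c.pj_ne_j h.symm⟩
lemma pi_not_M : pi ∉ M.V := fun h => ((c.memV pi).mp h).2.1 rfl
lemma pj_not_M : pj ∉ M.V := fun h => ((c.memV pj).mp h).2.2 rfl
lemma qi_mem : (q,i) ∈ M.A := (c.memA q i).mpr (Or.inr (Or.inl ⟨rfl, rfl⟩))
lemma gj_mem : (g,j) ∈ M.A := (c.memA g j).mpr (Or.inr (Or.inr ⟨rfl, rfl⟩))

end RC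

section Lift

lemma lift_cherry {N M N' M' : Net} {i j p g p' g' : ℕ}
    (c : CC N M i j p g) (c' : CC N' M' i j p' g') (hiso : NetIso M M') : NetIso N N' := by
  obtain ⟨φ, ⟨hmap, hinj, hsurj⟩, harc, hleaf⟩ := hiso
  have hmapF : ∀ v ∈ M.V, φ v ∈ M'.V := fun v hv => hmap hv
  have hinjF : ∀ a ∈ M.V, ∀ b ∈ M.V, φ a = φ b → a = b := fun a ha b hb h =>
    hinj (Finset.mem_coe.mpr ha) (Finset.mem_coe.mpr hb) h
  have hφj : φ j = j := hleaf j c.j_leaf_M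
  have hφg : φ g = g' := by
    refine c'.in_j_M (φ g) ?_
    have := (harc g c.g_mem_M j c.j_mem_M).mp c.gj_mem
    rwa [hφj] at this
  have hNV : ∀ v, v ∈ N.V ↔ v ∈ M.V ∨ v = i ∨ v = p := by
    intro v
    rw [c.memV]
    by_cases h1 : v = i
    · rw [h1]; simp [c.leaf_i.1]
    by_cases h2 : v = p
    · rw [h2]; simp [c.p_mem]
    · simp [h1, h2]
  have hNV' : ∀ v, v ∈ N'.V ↔ v ∈ M'.V ∨ v = i ∨ v = p' := by
    intro v
    rw [c'.memV]
    by_cases h1 : v = i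
    · rw [h1]; simp [c'.leaf_i.1]
    by_cases h2 : v = p'
    · rw [h2]; simp [c'.p_mem]
    · simp [h1, h2]
  set ψ : ℕ → ℕ := fun v => if v = i then i else if v = p then p' else φ v with hψ
  have hψi : ψ i = i := by simp [hψ]
  have hψp : ψ p = p' := by simp [hψ, c.p_ne_i]
  have hψv : ∀ v ∈ M.V, ψ v = φ v := by
    intro v hv
    obtain ⟨_, h1, h2⟩ := (c.memV v).mp hv
    simp [hψ, h1, h2]
  have hiM' : i ∉ M'.V := c'.i_not_M
  have hpM' : p' ∉ M'.V := c'.p_not_M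
  refine ⟨ψ, ⟨?_, ?_, ?_⟩, ?_, ?_⟩
  · -- MapsTo
    intro v hv
    simp only [Finset.mem_coe, hNV] at hv
    simp only [Finset.mem_coe, hNV']
    rcases hv with hv | hv | hv
    · rw [hψv v hv]; exact Or.inl (hmapF v hv)
    · rw [hv, hψi]; exact Or.inr (Or.inl rfl)
    · rw [hv, hψp]; exact Or.inr (Or.inr rfl)
  · -- InjOn
    intro a ha b hb hab
    simp only [Finset.mem_coe, hNV] at ha hb
    rcases ha with ha | ha | ha <;> rcases hb with hb | hb | hb
    · rw [hψv a ha, hψv b hb] at hab; exact hinjF a ha b hb hab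
    · rw [hψv a ha, hb, hψi] at hab; exact absurd (hab ▸ hmapF a ha) hiM'
    · rw [hψv a ha, hb, hψp] at hab; exact absurd (hab ▸ hmapF a ha) hpM'
    · rw [ha, hψi, hψv b hb] at hab; exact absurd (hab ▸ hmapF b hb) hiM'
    · rw [ha, hb]
    · rw [ha, hb, hψi, hψp] at hab; exact (c'.p_ne_i hab.symm).elim
    · rw [ha, hψp, hψv b hb] at hab; exact absurd (hab.symm ▸ hmapF b hb) hpM'
    · rw [ha, hb, hψp, hψi] at hab; exact (c'.p_ne_i hab).elim
    · rw [ha, hb]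
  · -- SurjOn
    intro v hv
    simp only [Finset.mem_coe, hNV'] at hv
    rcases hv with hv | hv | hv
    · obtain ⟨x, hx, hφx⟩ := hsurj (Finset.mem_coe.mpr hv)
      have hxM : x ∈ M.V := hx
      exact ⟨x, by simp only [Finset.mem_coe, hNV]; exact Or.inl hxM,
        by rw [hψv x hxM]; exact hφx⟩
    · exact ⟨i, by simp [Finset.mem_coe, hNV], by rw [hψi, hv]⟩
    · exact ⟨p, by simp [Finset.mem_coe, hNV], by rw [hψp, hv]⟩
  · -- arcs
    intro u hu v hv
    rcases (hNV u).mp hu with hu1 | hu1 | hu1 <;> rcases (hNV v).mp hv with hv1 | hv1 | hv1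
    · -- u, v ∈ M.V
      rw [hψv u hu1, hψv v hv1]
      constructor
      · intro h
        have hM : (u,v) ∈ M.A := (c.memA u v).mpr
          (Or.inl ⟨h, ((c.memV u).mp hu1).2.2, ((c.memV v).mp hv1).2.2⟩)
        have hM' := (harc u hu1 v hv1).mp hM
        refine (c'.memA_N (φ u) (φ v)).mpr (Or.inl ⟨hM', ?_⟩)
        rintro ⟨h1, h2⟩
        have hug : u = g := hinjF u hu1 g c.g_mem_M (h1.trans hφg.symm)
        have hvj : v = j := hinjF v hv1 j c.j_mem_M (h2.trans hφj.symm)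
        rw [hug, hvj] at h
        exact c.gj_not h
      · intro h
        rcases (c'.memA_N (φ u) (φ v)).mp h with ⟨hM', hne⟩ | ⟨h1, _⟩ | ⟨h1, h2⟩ | ⟨_, h2⟩
        · have hM := (harc u hu1 v hv1).mpr hM'
          rcases (c.memA u v).mp hM with ⟨hA, _⟩ | ⟨h1, h2⟩
          · exact hA
          · exact absurd ⟨h1 ▸ hφg, h2 ▸ hφj⟩ hne
        · exact absurd (h1 ▸ hmapF u hu1) hpM'
        · exact absurd (h1 ▸ hmapF u hu1) hpM'
        · exact absurd (h2 ▸ hmapF v hv1) hpM'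
    · -- u ∈ M.V, v = i
      rw [hv1, hψv u hu1, hψi]
      constructor
      · intro h
        exact absurd ((c.in_i u h) ▸ hu1) c.p_not_M
      · intro h
        exact absurd ((c'.in_i (φ u) h) ▸ hmapF u hu1) hpM'
    · -- u ∈ M.V, v = p
      rw [hv1, hψv u hu1, hψp]
      constructor
      · intro h
        have hug : u = g := c.in_p u h
        rw [hug, hφg]
        exact c'.hgp
      · intro h
        have : φ u = g' := c'.in_p (φ u) h
        have hug : u = g := hinjF u hu1 g c.g_mem_M (this.trans hφg.symm)
        rw [hug]
        exact c.hgp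
    · -- u = i, v ∈ M.V
      rw [hu1, hψi, hψv v hv1]
      exact iff_of_false (fun h => c.out_i v h) (fun h => c'.out_i (φ v) h)
    · rw [hu1, hv1, hψi]
      exact iff_of_false (fun h => c.out_i i h) (fun h => c'.out_i i h)
    · rw [hu1, hv1, hψi, hψp]
      exact iff_of_false (fun h => c.out_i p h) (fun h => c'.out_i p' h)
    · -- u = p, v ∈ M.V
      rw [hu1, hψp, hψv v hv1]
      constructor
      · intro h
        rcases c.out_p v h with h1 | h1
        · exact absurd (h1 ▸ hv1) c.i_not_M
        · rw [h1, hφj]; exact c'.hpj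
      · intro h
        rcases c'.out_p (φ v) h with h1 | h1
        · exact absurd (h1 ▸ hmapF v hv1) hiM'
        · have : v = j := hinjF v hv1 j c.j_mem_M (h1.trans hφj.symm)
          rw [this]; exact c.hpj
    · -- u = p, v = i
      rw [hu1, hv1, hψp, hψi]
      exact iff_of_true c.hpi c'.hpi
    · -- u = p, v = p
      rw [hu1, hv1, hψp]
      exact iff_of_false (fun h => Net.no_self c.phylo h) (fun h => Net.no_self c'.phylo h)
  · -- leaves
    intro x hx
    by_cases hxi : x = i
    · rw [hxi, hψi]
    · have hxM : x ∈ M.leaves := by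
        rw [c.leaves_M]; exact Finset.mem_erase.mpr ⟨hxi, hx⟩
      have hxMV : x ∈ M.V := Finset.mem_filter.mp hxM |>.1
      rw [hψv x hxMV]
      exact hleaf x hxM

end Lift

section LiftRet

lemma lift_ret {N M N' M' : Net} {i j pi pj q g pi' pj' q' g' : ℕ}
    (c : RC N M i j pi pj q g) (c' : RC N' M' i j pi' pj' q' g') (hiso : NetIso M M') :
    NetIso N N' := by
  obtain ⟨φ, ⟨hmap, hinj, hsurj⟩, harc, hleaf⟩ := hiso
  have hmapF : ∀ v ∈ M.V, φ v ∈ M'.V := fun v hv => hmap hv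
  have hinjF : ∀ a ∈ M.V, ∀ b ∈ M.V, φ a = φ b → a = b := fun a ha b hb h =>
    hinj (Finset.mem_coe.mpr ha) (Finset.mem_coe.mpr hb) h
  have hφi : φ i = i := hleaf i c.i_leaf_M
  have hφj : φ j = j := hleaf j c.j_leaf_M
  have hφq : φ q = q' := by
    refine c'.in_i_M (φ q) ?_
    have := (harc q c.q_mem_M i c.i_mem_M).mp c.qi_mem
    rwa [hφi] at this
  have hφg : φ g = g' := by
    refine c'.in_j_M (φ g) ?_
    have := (harc g c.g_mem_M j c.j_mem_M).mp c.gj_mem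
    rwa [hφj] at this
  have hNV : ∀ v, v ∈ N.V ↔ v ∈ M.V ∨ v = pi ∨ v = pj := by
    intro v
    rw [c.memV]
    by_cases h1 : v = pi
    · rw [h1]; simp [c.pi_mem]
    by_cases h2 : v = pj
    · rw [h2]; simp [c.pj_mem]
    · simp [h1, h2]
  have hNV' : ∀ v, v ∈ N'.V ↔ v ∈ M'.V ∨ v = pi' ∨ v = pj' := by
    intro v
    rw [c'.memV]
    by_cases h1 : v = pi'
    · rw [h1]; simp [c'.pi_mem]
    by_cases h2 : v = pj'
    · rw [h2]; simp [c'.pj_mem]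
    · simp [h1, h2]
  set ψ : ℕ → ℕ := fun v => if v = pi then pi' else if v = pj then pj' else φ v with hψ
  have hψpi : ψ pi = pi' := by simp [hψ]
  have hψpj : ψ pj = pj' := by
    show (if pj = pi then pi' else if pj = pj then pj' else φ pj) = pj'
    rw [if_neg (fun h : pj = pi => c.pi_ne_pj h.symm), if_pos rfl]
  have hψv : ∀ v ∈ M.V, ψ v = φ v := by
    intro v hv
    obtain ⟨_, h1, h2⟩ := (c.memV v).mp hv
    simp [hψ, h1, h2]
  have hpiM' : pi' ∉ M'.V := c'.pi_not_M
  have hpjM' : pj' ∉ M'.V := c'.pj_not_M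
  refine ⟨ψ, ⟨?_, ?_, ?_⟩, ?_, ?_⟩
  · intro v hv
    simp only [Finset.mem_coe, hNV] at hv
    simp only [Finset.mem_coe, hNV']
    rcases hv with hv | hv | hv
    · rw [hψv v hv]; exact Or.inl (hmapF v hv)
    · rw [hv, hψpi]; exact Or.inr (Or.inl rfl)
    · rw [hv, hψpj]; exact Or.inr (Or.inr rfl)
  · intro a ha b hb hab
    simp only [Finset.mem_coe, hNV] at ha hb
    rcases ha with ha | ha | ha <;> rcases hb with hb | hb | hb
    · rw [hψv a ha, hψv b hb] at hab; exact hinjF a ha b hb hab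
    · rw [hψv a ha, hb, hψpi] at hab; exact absurd (hab ▸ hmapF a ha) hpiM'
    · rw [hψv a ha, hb, hψpj] at hab; exact absurd (hab ▸ hmapF a ha) hpjM'
    · rw [ha, hψpi, hψv b hb] at hab; exact absurd (hab.symm ▸ hmapF b hb) hpiM'
    · rw [ha, hb]
    · rw [ha, hb, hψpi, hψpj] at hab; exact (c'.pi_ne_pj hab).elim
    · rw [ha, hψpj, hψv b hb] at hab; exact absurd (hab.symm ▸ hmapF b hb) hpjM'
    · rw [ha, hb, hψpj, hψpi] at hab; exact (c'.pi_ne_pj hab.symm).elim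
    · rw [ha, hb]
  · intro v hv
    simp only [Finset.mem_coe, hNV'] at hv
    rcases hv with hv | hv | hv
    · obtain ⟨x, hx, hφx⟩ := hsurj (Finset.mem_coe.mpr hv)
      have hxM : x ∈ M.V := hx
      exact ⟨x, by simp only [Finset.mem_coe, hNV]; exact Or.inl hxM,
        by rw [hψv x hxM]; exact hφx⟩
    · exact ⟨pi, by simp [Finset.mem_coe, hNV], by rw [hψpi, hv]⟩
    · exact ⟨pj, by simp [Finset.mem_coe, hNV], by rw [hψpj, hv]⟩
  · intro u hu v hv
    rcases (hNV u).mp hu with hu1 | hu1 | hu1 <;> rcases (hNV v).mp hv with hv1 | hv1 | hv1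
    · -- u, v ∈ M.V
      rw [hψv u hu1, hψv v hv1]
      constructor
      · intro h
        obtain ⟨_, hu2, hu3⟩ := (c.memV u).mp hu1
        obtain ⟨_, hv2, hv3⟩ := (c.memV v).mp hv1
        have hM : (u,v) ∈ M.A := (c.memA u v).mpr (Or.inl ⟨h, hu2, hv2, hu3, hv3⟩)
        have hM' := (harc u hu1 v hv1).mp hM
        refine (c'.memA_N (φ u) (φ v)).mpr (Or.inl ⟨hM', ?_, ?_⟩)
        · rintro ⟨h1, h2⟩
          have huq : u = q := hinjF u hu1 q c.q_mem_M (h1.trans hφq.symm)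
          have hvi : v = i := hinjF v hv1 i c.i_mem_M (h2.trans hφi.symm)
          rw [huq, hvi] at h
          exact c.qi_not h
        · rintro ⟨h1, h2⟩
          have hug : u = g := hinjF u hu1 g c.g_mem_M (h1.trans hφg.symm)
          have hvj : v = j := hinjF v hv1 j c.j_mem_M (h2.trans hφj.symm)
          rw [hug, hvj] at h
          exact c.gj_not h
      · intro h
        rcases (c'.memA_N (φ u) (φ v)).mp h with
          ⟨hM', hn1, hn2⟩ | ⟨h1, h2⟩ | ⟨h1, h2⟩ | ⟨h1, h2⟩ | ⟨h1, h2⟩ | ⟨h1, h2⟩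
        · have hM := (harc u hu1 v hv1).mpr hM'
          rcases (c.memA u v).mp hM with ⟨hA, _⟩ | ⟨h1, h2⟩ | ⟨h1, h2⟩
          · exact hA
          · exact absurd ⟨h1 ▸ hφq, h2 ▸ hφi⟩ hn1
          · exact absurd ⟨h1 ▸ hφg, h2 ▸ hφj⟩ hn2
        · exact absurd (h1 ▸ hmapF u hu1) hpjM'
        · exact absurd (h2 ▸ hmapF v hv1) hpiM'
        · exact absurd (h1 ▸ hmapF u hu1) hpiM'
        · exact absurd (h2 ▸ hmapF v hv1) hpjM'
        · exact absurd (h1 ▸ hmapF u hu1) hpjM'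
    · -- u ∈ M.V, v = pi
      rw [hv1, hψv u hu1, hψpi]
      constructor
      · intro h
        rcases c.in_pi u h with h1 | h1
        · exact absurd (h1 ▸ hu1) c.pj_not_M
        · rw [h1, hφq]; exact c'.hqpi
      · intro h
        rcases c'.in_pi (φ u) h with h1 | h1
        · exact absurd (h1 ▸ hmapF u hu1) hpjM'
        · have huq : u = q := hinjF u hu1 q c.q_mem_M (h1.trans hφq.symm)
          rw [huq]; exact c.hqpi
    · -- u ∈ M.V, v = pj
      rw [hv1, hψv u hu1, hψpj]
      constructor
      · intro h
        rw [c.in_pj u h, hφg]; exact c'.hgpj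
      · intro h
        have hug : u = g := hinjF u hu1 g c.g_mem_M ((c'.in_pj (φ u) h).trans hφg.symm)
        rw [hug]; exact c.hgpj
    · -- u = pi, v ∈ M.V
      rw [hu1, hψpi, hψv v hv1]
      constructor
      · intro h
        rw [c.out_pi v h, hφi]; exact c'.hpii
      · intro h
        have hvi : v = i := hinjF v hv1 i c.i_mem_M ((c'.out_pi (φ v) h).trans hφi.symm)
        rw [hvi]; exact c.hpii
    · rw [hu1, hv1, hψpi]
      exact iff_of_false (fun h => Net.no_self c.phylo h) (fun h => Net.no_self c'.phylo h)
    · -- u = pi, v = pj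
      rw [hu1, hv1, hψpi, hψpj]
      exact iff_of_false (fun h => c.pj_ne_i (c.out_pi pj h))
        (fun h => c'.pj_ne_i (c'.out_pi pj' h))
    · -- u = pj, v ∈ M.V
      rw [hu1, hψpj, hψv v hv1]
      constructor
      · intro h
        rcases c.out_pj v h with h1 | h1
        · rw [h1, hφj]; exact c'.hpjj
        · exact absurd (h1 ▸ hv1) c.pi_not_M
      · intro h
        rcases c'.out_pj (φ v) h with h1 | h1
        · have hvj : v = j := hinjF v hv1 j c.j_mem_M (h1.trans hφj.symm)
          rw [hvj]; exact c.hpjj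
        · exact absurd (h1 ▸ hmapF v hv1) hpiM'
    · -- u = pj, v = pi
      rw [hu1, hv1, hψpj, hψpi]
      exact iff_of_true c.hpjpi c'.hpjpi
    · rw [hu1, hv1, hψpj]
      exact iff_of_false (fun h => Net.no_self c.phylo h) (fun h => Net.no_self c'.phylo h)
  · intro x hx
    have h1 : x ≠ pi := by
      rintro rfl
      have h2 := (Finset.mem_filter.mp hx).2.1
      have := c.retic_pi.2.1
      omega
    have h2 : x ≠ pj := by
      rintro rfl
      have h2 := (Finset.mem_filter.mp hx).2.2
      have := c.tree_pj.2.2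
      omega
    have hxM : x ∈ M.leaves := by rw [c.leaves_M]; exact hx
    have hxMV : x ∈ M.V := (Finset.mem_filter.mp hxM).1
    rw [hψv x hxMV]
    exact hleaf x hxM

end LiftRet

section Main

lemma mixed_absurd {N M N' M' T T' : Net} {s : ℕ × ℕ} {S : List (ℕ×ℕ)} {l l' : ℕ}
    {p g pi pj q gg : ℕ}
    (c : CC N M s.1 s.2 p g) (r : RC N' M' s.1 s.2 pi pj q gg)
    (hL : N.leaves = N'.leaves)
    (hseq : ReducesSeq M S T) (ht : isTrivial T l)
    (hseq' : ReducesSeq M' S T') (ht' : isTrivial T' l') : False := by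
  have hML : M.leaves = N.leaves.erase s.1 := c.leaves_M
  have hML' : M'.leaves = N.leaves := by rw [r.leaves_M, ← hL]
  have hi : s.1 ∈ N.leaves := c.i_leaf_N
  by_cases hS : S = []
  · subst hS
    cases hseq
    cases hseq'
    have h1 : M.leaves = {l} := trivial_leaves ht
    have h2 : M'.leaves = {l'} := trivial_leaves ht'
    rw [hML'] at h2
    rw [hML, h2] at h1
    rw [h2, Finset.mem_singleton] at hi
    rw [hi, Finset.erase_singleton] at h1
    exact Finset.singleton_ne_empty l h1.symm
  · have e1 := leaves_det hseq c.phylo_M ht hS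
    have e2 := leaves_det hseq' r.phylo_M ht' hS
    have heq : N.leaves.erase s.1 = N.leaves := by rw [← hML, e1, ← e2, hML']
    have hnot : s.1 ∉ N.leaves.erase s.1 := Finset.notMem_erase _ _
    rw [heq] at hnot
    exact hnot hi

lemma common_iso : ∀ (S : List (ℕ×ℕ)) (N N' T T' : Net) (l l' : ℕ),
    N.isPhylo → N'.isPhylo → N.leaves = N'.leaves →
    ReducesSeq N S T → isTrivial T l → ReducesSeq N' S T' → isTrivial T' l' →
    NetIso N N' := by
  intro S
  induction S with
  | nil =>
    intro N N' T T' l l' hN hN' hL hseq ht hseq' ht'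
    cases hseq
    cases hseq'
    have h1 := trivial_leaves ht
    have h2 := trivial_leaves ht'
    rw [h1, h2] at hL
    have hll : l = l' := by
      have := Finset.mem_singleton.mp (hL ▸ Finset.mem_singleton_self l)
      exact this
    exact trivial_iso ht (hll ▸ ht')
  | cons s S ih =>
    intro N N' T T' l l' hN hN' hL hseq ht hseq' ht'
    cases hseq with
    | cons hred hseq2 =>
    cases hseq' with
    | cons hred' hseq2' =>
    rename_i M M'
    rcases hred with ⟨hc, hr⟩ | ⟨hc, hr⟩ <;> rcases hred' with ⟨hc', hr'⟩ | ⟨hc', hr'⟩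
    · obtain ⟨p, g0, c⟩ := CC.of_reduces hN hc hr
      obtain ⟨p', g0', c'⟩ := CC.of_reduces hN' hc' hr'
      have hLM : M.leaves = M'.leaves := by rw [c.leaves_M, c'.leaves_M, hL]
      exact lift_cherry c c'
        (ih M M' T T' l l' c.phylo_M c'.phylo_M hLM hseq2 ht hseq2' ht')
    · obtain ⟨p, g0, c⟩ := CC.of_reduces hN hc hr
      obtain ⟨pi, pj, q, g0', c'⟩ := RC.of_reduces hN' hc' hr'
      exact (mixed_absurd c c' hL hseq2 ht hseq2' ht').elim
    · obtain ⟨p, g0, c⟩ := CC.of_reduces hN' hc' hr'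
      obtain ⟨pi, pj, q, g0', c'⟩ := RC.of_reduces hN hc hr
      exact (mixed_absurd c c' hL.symm hseq2' ht' hseq2 ht).elim
    · obtain ⟨pi, pj, q, g0, c⟩ := RC.of_reduces hN hc hr
      obtain ⟨pi', pj', q', g0', c'⟩ := RC.of_reduces hN' hc' hr'
      have hLM : M.leaves = M'.leaves := by rw [c.leaves_M, c'.leaves_M, hL]
      exact lift_ret c c'
        (ih M M' T T' l l' c.phylo_M c'.phylo_M hLM hseq2 ht hseq2' ht')

lemma exists_min_pair (A : Set (ℕ×ℕ)) (hA : A.Nonempty) : ∃ m ∈ A, ∀ a ∈ A, pairLE m a := by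
  obtain ⟨a0, ha0⟩ := hA
  obtain ⟨f0, hf0mem, hf0min⟩ := (wellFounded_lt (α := ℕ)).has_min {x | ∃ b, (x, b) ∈ A}
    ⟨a0.1, a0.2, by simpa using ha0⟩
  obtain ⟨b0, hb0, hb0min⟩ := (wellFounded_lt (α := ℕ)).has_min {b | (f0, b) ∈ A} hf0mem
  refine ⟨(f0, b0), hb0, ?_⟩
  intro a ha
  have h1 : ¬ a.1 < f0 := hf0min a.1 ⟨a.2, by simpa using ha⟩
  by_cases h2 : f0 = a.1
  · by_cases h3 : b0 = a.2
    · right; exact ⟨h2, le_of_eq h3⟩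
    · have : ¬ a.2 < b0 := by
        refine hb0min a.2 ?_
        show (f0, a.2) ∈ A
        rw [h2]
        simpa using ha
      right; exact ⟨h2, by omega⟩
  · left
    simp only
    omega

lemma exists_min_seq : ∀ (L : ℕ) (T : Set (List (ℕ×ℕ))), T.Nonempty →
    (∀ S ∈ T, S.length = L) → ∃ S0 ∈ T, ∀ S ∈ T, seqLE S0 S := by
  intro L
  induction L with
  | zero =>
    rintro T ⟨S0, hS0⟩ hlen
    have hnil : ∀ S ∈ T, S = [] := fun S hS => List.length_eq_zero_iff.mp (hlen S hS)
    refine ⟨S0, hS0, fun S hS => ?_⟩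
    rw [hnil S hS, hnil S0 hS0]
    exact trivial
  | succ L ih =>
    rintro T ⟨S0, hS0⟩ hlen
    have hhead : ∀ S ∈ T, ∃ s R, S = s :: R ∧ R.length = L := by
      intro S hS
      cases S with
      | nil => exact absurd (hlen _ hS) (by simp)
      | cons s R =>
        have := hlen _ hS
        simp only [List.length_cons] at this
        exact ⟨s, R, rfl, by omega⟩
    have hHne : ({s | ∃ R, s :: R ∈ T} : Set (ℕ×ℕ)).Nonempty := by
      obtain ⟨s, R, hSR, _⟩ := hhead S0 hS0
      exact ⟨s, R, hSR ▸ hS0⟩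
    obtain ⟨m, ⟨Rm, hRm⟩, hmin⟩ := exists_min_pair _ hHne
    have hT'ne : ({R | m :: R ∈ T} : Set (List (ℕ×ℕ))).Nonempty := ⟨Rm, hRm⟩
    have hT'len : ∀ R ∈ ({R | m :: R ∈ T} : Set (List (ℕ×ℕ))), R.length = L := by
      intro R hR
      have := hlen _ hR
      simp only [List.length_cons] at this
      omega
    obtain ⟨R0, hR0, hR0min⟩ := ih _ hT'ne hT'len
    refine ⟨m :: R0, hR0, ?_⟩
    intro S hS
    obtain ⟨s, R, rfl, _⟩ := hhead S hS
    have hle : pairLE m s := hmin s ⟨R, hS⟩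
    show pairLT m s ∨ (m = s ∧ seqLE R0 R)
    by_cases hms : m = s
    · right
      refine ⟨hms, hR0min R ?_⟩
      show m :: R ∈ T
      rw [hms]
      exact hS
    · left
      rcases hle with h | ⟨h1, h2⟩
      · exact Or.inl h
      · right
        refine ⟨h1, ?_⟩
        rcases Nat.lt_or_ge m.2 s.2 with h3 | h3
        · exact h3
        · exact absurd (Prod.ext h1 (by omega)) hms

lemma seqLE_antisymm : ∀ S S' : List (ℕ×ℕ), seqLE S S' → seqLE S' S → S = S' := by
  intro S
  induction S with
  | nil =>
    intro S' h h'
    cases S' with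
    | nil => rfl
    | cons a T => exact h.elim
  | cons p S ih =>
    intro S' h h'
    cases S' with
    | nil => exact h.elim
    | cons q S' =>
      rcases h with h | ⟨hpq, h2⟩
      · rcases h' with h' | ⟨hqp, h2'⟩
        · rcases h with h | ⟨ha, hb⟩ <;> rcases h' with h' | ⟨ha', hb'⟩ <;> omega
        · rw [hqp] at h
          rcases h with h | ⟨ha, hb⟩ <;> omega
      · rcases h' with h' | ⟨hqp, h2'⟩
        · rw [hpq] at h'
          rcases h' with h' | ⟨ha, hb⟩ <;> omega
        · rw [hpq, ih S' h2 h2']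

lemma complete_length {N : Net} (hN : N.isPhylo) {S : List (ℕ×ℕ)} (h : CompleteRS N S) :
    2 + 2 * S.length = N.V.card := by
  obtain ⟨T, l, hseq, ht⟩ := h
  have h1 := (seq_phylo_card hseq hN).2
  rw [trivial_card ht] at h1
  omega

lemma exists_mcrs {N : Net} (hN : N.isOrchard) : ∃! S, isMCRS N S := by
  obtain ⟨hphy, S0, hS0⟩ := hN
  have hlen : ∀ S ∈ {S | CompleteRS N S}, S.length = S0.length := by
    intro S hS
    have h1 := complete_length hphy hS
    have h2 := complete_length hphy hS0
    omega
  obtain ⟨Sm, hSm, hmin⟩ := exists_min_seq S0.length {S | CompleteRS N S} ⟨S0, hS0⟩ hlen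
  refine ⟨Sm, ⟨hSm, fun S' hS' => hmin S' hS'⟩, ?_⟩
  rintro S ⟨hS, hSmin⟩
  exact seqLE_antisymm S Sm (hSmin Sm hSm) (hmin S hS)

end Main

/-- `N ↦ MCRS(N)` is a bijection between the isomorphism classes of orchard
networks on `X` with `r` reticulations and the set `S(X,r)`: each such network
has exactly one `MCRS`, and two such networks with the same `MCRS` are
isomorphic (surjectivity onto `S(X,r)` holds by definition). -/
theorem mcrs_bijection (X : Finset ℕ) (r : ℕ) :
    (∀ N : Net, N.isOrchard → N.leaves = X → N.numRetic = r →
      ∃! S, isMCRS N S) ∧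
    (∀ S ∈ MCRSSet X r, ∀ N N' : Net,
      (N.isOrchard ∧ N.leaves = X ∧ N.numRetic = r ∧ isMCRS N S) →
      (N'.isOrchard ∧ N'.leaves = X ∧ N'.numRetic = r ∧ isMCRS N' S) →
      NetIso N N') := by
  constructor
  · intro N hN _ _
    exact exists_mcrs hN
  · rintro S _ N N' ⟨hN, hNL, _, hMC⟩ ⟨hN', hNL', _, hMC'⟩
    obtain ⟨T, l, hseq, ht⟩ := hMC.1
    obtain ⟨T', l', hseq', ht'⟩ := hMC'.1
    exact common_iso S N N' T T' l l' hN.1 hN'.1 (hNL.trans hNL'.symm) hseq ht hseq' ht'
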